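/- arXiv:math/0503130 — 11 statements merged into one kernel-verified Lean document; each statement's English description precedes it below -/
import Mathlib

section
/- Let X be a compact Hausdorff space and n ≥ 2 an integer. Then the following are equivalent: (1) for every continuous map f : X → S¹ and every ε > 0 there exists a continuous map g : X → S¹ such that sup_{x ∈ X} |f(x) − g(x)ⁿ| < ε; (2) for every continuous map f : X → S¹ there exists a continuous map g : X → S¹ such that f is homotopic to the pointwise n-th power gⁿ. -/
open Complex ContinuousMap

/-- A point of the unit circle other than `-1` lies in the slit plane. -/
lemma circle_mem_slitPlane_of_ne_neg_one (z : Circle) (hz : (z : ℂ) ≠ -1) :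
    (z : ℂ) ∈ Complex.slitPlane := by
  rw [Complex.mem_slitPlane_iff]
  by_contra h
  push_neg at h
  obtain ⟨hre, him⟩ := h
  have habs : ‖(z : ℂ)‖ = 1 := z.norm_coe
  have hz' : (z : ℂ) = ((z : ℂ).re : ℂ) := Complex.ext rfl (by simp [him])
  rw [hz', Complex.norm_real, Real.norm_eq_abs] at habs
  have : (z : ℂ).re = -1 := by
    rcases abs_eq (by norm_num : (0:ℝ) ≤ 1) |>.mp habs with h1 | h1
    · linarith
    · exact h1
  apply hz
  rw [hz', this]
  norm_num

/-- If two continuous circle-valued maps are pointwise never antipodal, then they differ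
by the exponential of a continuous real function. -/
lemma exists_log_of_close {X : Type*} [TopologicalSpace X]
    (p q : C(X, Circle)) (h : ∀ x, ‖(p x : ℂ) - (q x : ℂ)‖ < 2) :
    ∃ φ : C(X, ℝ), ∀ x, p x = q x * Circle.exp (φ x) := by
  have hne : ∀ x, ((p x / q x : Circle) : ℂ) ≠ -1 := by
    intro x hx
    rw [Circle.coe_div, div_eq_iff (q x).coe_ne_zero] at hx
    have := h x
    rw [hx] at this
    have : ‖(-1 : ℂ) * (q x : ℂ) - (q x : ℂ)‖ = 2 := by
      have : (-1 : ℂ) * (q x : ℂ) - (q x : ℂ) = -(2 * (q x : ℂ)) := by ring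
      rw [this, norm_neg, norm_mul]
      simp [Circle.norm_coe]
    linarith
  have hcc : Continuous fun x => ((p x / q x : Circle) : ℂ) :=
    continuous_induced_dom.comp (p.continuous.div' q.continuous)
  have hcont : Continuous fun x => Complex.arg ((p x / q x : Circle) : ℂ) := by
    rw [continuous_iff_continuousAt]
    intro x
    exact ContinuousAt.comp (g := Complex.arg)
      (f := fun x => ((p x / q x : Circle) : ℂ)) (x := x)
      (Complex.continuousAt_arg (circle_mem_slitPlane_of_ne_neg_one _ (hne x)))
      hcc.continuousAt
  refine ⟨⟨fun x => Complex.arg ((p x / q x : Circle) : ℂ), hcont⟩, fun x => ?_⟩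
  show p x = q x * Circle.exp (Complex.arg ((p x / q x : Circle) : ℂ))
  rw [Circle.exp_arg]
  simp

/-- A circle-valued map is homotopic to itself times the exponential of a real function. -/
lemma homotopic_mul_exp {X : Type*} [TopologicalSpace X]
    (q : C(X, Circle)) (φ : C(X, ℝ)) :
    q.Homotopic ⟨fun x => q x * Circle.exp (φ x),
      q.continuous.mul (Circle.exp.continuous.comp φ.continuous)⟩ := by
  refine ⟨{ toFun := fun p => q p.2 * Circle.exp ((p.1 : ℝ) * φ p.2)
            continuous_toFun := ?_
            map_zero_left := ?_
            map_one_left := ?_ }⟩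
  · exact (q.continuous.comp continuous_snd).mul
      (Circle.exp.continuous.comp
        ((continuous_subtype_val.comp continuous_fst).mul
          (φ.continuous.comp continuous_snd)))
  · intro x; simp [Circle.exp_zero]
  · intro x; simp

lemma circle_exp_pow (t : ℝ) (n : ℕ) : Circle.exp t ^ n = Circle.exp (n * t) := by
  induction n with
  | zero => simp [Circle.exp_zero]
  | succ k ih =>
    rw [pow_succ, ih, ← Circle.exp_add]
    congr 1
    push_cast
    ring

/-- For a compact Hausdorff space `X` and an integer `n ≥ 2`, the following
are equivalent: (1) every continuous map `f : X → S¹` can be uniformly approximated by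
`n`-th powers of continuous maps `g : X → S¹`; (2) every continuous map `f : X → S¹` is
homotopic to the pointwise `n`-th power of some continuous map `g : X → S¹`. -/
theorem circle_approx_nth_power_iff_homotopic_nth_power
    (X : Type*) [TopologicalSpace X] [CompactSpace X] [T2Space X]
    (n : ℕ) (hn : 2 ≤ n) :
    (∀ (f : C(X, Circle)) (ε : ℝ), 0 < ε →
      ∃ g : C(X, Circle), ∀ x : X, ‖(f x : ℂ) - (g x : ℂ) ^ n‖ < ε) ↔
    (∀ f : C(X, Circle), ∃ g : C(X, Circle), f.Homotopic (g ^ n)) := by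
  have hn0 : (n : ℝ) ≠ 0 := by positivity
  constructor
  · -- approximation implies homotopy
    intro happrox f
    obtain ⟨g, hg⟩ := happrox f 1 one_pos
    refine ⟨g, ?_⟩
    have hclose : ∀ x, ‖(f x : ℂ) - ((g ^ n) x : ℂ)‖ < 2 := by
      intro x
      have := hg x
      rw [ContinuousMap.pow_apply, Circle.coe_pow]
      linarith
    obtain ⟨φ, hφ⟩ := exists_log_of_close f (g ^ n) hclose
    have h1 : f = ⟨fun x => (g ^ n) x * Circle.exp (φ x),
        (g ^ n).continuous.mul (Circle.exp.continuous.comp φ.continuous)⟩ := by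
      ext x
      exact congrArg Subtype.val (hφ x)
    rw [h1]
    exact (homotopic_mul_exp (g ^ n) φ).symm
  · -- homotopy implies (in fact exact) approximation
    intro hhom f ε hε
    obtain ⟨g, ⟨H⟩⟩ := hhom f
    set c : C(unitInterval, C(X, Circle)) := H.toContinuousMap.curry with hc
    set S : Set unitInterval :=
      {t | ∃ φ : C(X, ℝ), ∀ x, f x = c t x * Circle.exp (φ x)} with hS
    -- transfer along short distances
    have key : ∀ t s : unitInterval, dist (c t) (c s) < 2 → t ∈ S → s ∈ S := by
      intro t s hts ⟨φ, hφ⟩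
      have hclose : ∀ x, ‖((c t x : Circle) : ℂ) - ((c s x : Circle) : ℂ)‖ < 2 := by
        intro x
        have h1 : dist (c t x) (c s x) ≤ dist (c t) (c s) :=
          ContinuousMap.dist_apply_le_dist x
        have h2 : dist (c t x) (c s x) = ‖((c t x : Circle) : ℂ) - ((c s x : Circle) : ℂ)‖ := by
          exact dist_eq_norm ((c t x : Circle) : ℂ) ((c s x : Circle) : ℂ)
        linarith
      obtain ⟨ψ, hψ⟩ := exists_log_of_close (c t) (c s) hclose
      refine ⟨ψ + φ, fun x => ?_⟩
      rw [hφ x, hψ x, ContinuousMap.add_apply, Circle.exp_add, mul_assoc]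
    have hzero : (0 : unitInterval) ∈ S := by
      refine ⟨0, fun x => ?_⟩
      have : c 0 x = f x := by
        simp [hc, ContinuousMap.curry_apply]
      rw [this]
      simp [Circle.exp_zero]
    have hclopen : IsClopen S := by
      constructor
      · -- closed: complement open
        rw [← isOpen_compl_iff, isOpen_iff_mem_nhds]
        intro t ht
        have : c ⁻¹' (Metric.ball (c t) 2) ∈ nhds t :=
          c.continuous.continuousAt.preimage_mem_nhds
            (Metric.ball_mem_nhds _ (by norm_num))
        refine Filter.mem_of_superset this ?_
        intro s hs hsS
        exact ht (key s t (by simpa [dist_comm] using hs) hsS)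
      · rw [isOpen_iff_mem_nhds]
        intro t ht
        have : c ⁻¹' (Metric.ball (c t) 2) ∈ nhds t :=
          c.continuous.continuousAt.preimage_mem_nhds
            (Metric.ball_mem_nhds _ (by norm_num))
        refine Filter.mem_of_superset this ?_
        intro s hs
        exact key t s (by simpa [dist_comm] using hs) ht
    have hSuniv : S = Set.univ := by
      rcases isClopen_iff.mp hclopen with h | h
      · exact absurd (h ▸ hzero) (Set.notMem_empty _)
      · exact h
    have hone : (1 : unitInterval) ∈ S := hSuniv ▸ Set.mem_univ _
    obtain ⟨φ, hφ⟩ := hone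
    have hc1 : ∀ x, c 1 x = (g x) ^ n := by
      intro x
      simp [hc, ContinuousMap.curry_apply]
    refine ⟨⟨fun x => g x * Circle.exp (φ x / n),
      g.continuous.mul (Circle.exp.continuous.comp (φ.continuous.div_const _))⟩, fun x => ?_⟩
    have hroot : (g x * Circle.exp (φ x / n)) ^ n = f x := by
      rw [mul_pow, circle_exp_pow, mul_div_cancel₀ _ hn0, ← hc1 x, ← hφ x]
    show ‖(f x : ℂ) - ((g x * Circle.exp (φ x / ↑n) : Circle) : ℂ) ^ n‖ < ε
    rw [← Circle.coe_pow, hroot, sub_self, norm_zero]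
    exact hε
end

section
/- Fix an integer n ≥ 2. Let X be the limit space of an inverse system {X_α, p^β_α : α, β ∈ A} of compact Hausdorff spaces over a directed partially ordered set A, and suppose that every X_α satisfies condition (*)_n. Then X satisfies condition (*)_n. -/
/-! By directedness, the functions on the limit that factor through a single stage form a
star subalgebra, and it separates points, so by Stone–Weierstrass it is uniformly dense.
Approximate `f` within `ε/2` by `fₐ ∘ pₐ`, then `fₐ` within `ε/2` by `gₐⁿ` on `Xₐ`;
`gₐ ∘ pₐ` works for `f`. -/


universe u

/-- An inverse system of compact Hausdorff spaces over a directed partially ordered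
index set, with continuous bonding maps `p h : X β → X α` for `h : α ≤ β` satisfying
`p (le_refl α) = id` and `p h₁ ∘ p h₂ = p (h₁.trans h₂)`. -/
structure InvSystemCH : Type (u + 1) where
  /-- the index set -/
  A : Type u
  [ord : PartialOrder A]
  idx_nonempty : Nonempty A
  directed : ∀ a b : A, ∃ c : A, a ≤ c ∧ b ≤ c
  /-- the spaces of the system -/
  X : A → Type u
  [topX : ∀ a : A, TopologicalSpace (X a)]
  compactX : ∀ a : A, CompactSpace (X a)
  t2X : ∀ a : A, T2Space (X a)
  /-- the bonding maps -/
  p : ∀ {a b : A}, a ≤ b → C(X b, X a)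
  p_id : ∀ (a : A) (x : X a), p (le_refl a) x = x
  p_comp : ∀ {a b c : A} (h₁ : a ≤ b) (h₂ : b ≤ c) (x : X c),
    p h₁ (p h₂ x) = p (h₁.trans h₂) x

attribute [instance] InvSystemCH.ord InvSystemCH.topX

/-- The limit space of an inverse system: the subspace of the product `∀ a, X a`
consisting of the threads, with the subspace topology. -/
abbrev InvSystemCH.Limit (S : InvSystemCH.{u}) : Type u :=
  { x : ∀ a : S.A, S.X a // ∀ (a b : S.A) (h : a ≤ b), S.p h (x b) = x a }


/-- Condition `(*)ₙ`: every continuous complex-valued function on `Y` can be uniformly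
approximated by `n`-th powers of continuous complex-valued functions. -/
def SatisfiesStarN (n : ℕ) (Y : Type*) [TopologicalSpace Y] : Prop :=
  ∀ (f : C(Y, ℂ)) (ε : ℝ), 0 < ε → ∃ g : C(Y, ℂ), ∀ y : Y, ‖f y - g y ^ n‖ < ε

namespace InvSystemCH

variable (S : InvSystemCH.{u})

def proj (a : S.A) : C(S.Limit, S.X a) :=
  ⟨fun x => x.1 a, (continuous_apply a).comp continuous_subtype_val⟩

theorem comp_proj_eq_comp_proj {a c : S.A} (h : a ≤ c) (fa : C(S.X a, ℂ)) :
    fa.comp (S.proj a) = (fa.comp (S.p h)).comp (S.proj c) := by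
  ext x
  exact congrArg fa (x.2 a c h).symm

theorem isClosed_threads :
    IsClosed {x : ∀ a : S.A, S.X a | ∀ (a b : S.A) (h : a ≤ b), S.p h (x b) = x a} := by
  have := S.t2X
  simp only [Set.ofPred_forall]
  exact isClosed_iInter fun a => isClosed_iInter fun b => isClosed_iInter fun h =>
    isClosed_eq ((S.p h).continuous.comp (continuous_apply b)) (continuous_apply a)

instance : CompactSpace S.Limit :=
  haveI := S.compactX
  isCompact_iff_compactSpace.mp S.isClosed_threads.isCompact

instance : T2Space S.Limit :=
  haveI := S.t2X
  inferInstance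

def stageSubalgebra : StarSubalgebra ℂ C(S.Limit, ℂ) where
  carrier := {f | ∃ (a : S.A) (fa : C(S.X a, ℂ)), f = fa.comp (S.proj a)}
  mul_mem' := by
    rintro f g ⟨a, fa, rfl⟩ ⟨b, fb, rfl⟩
    obtain ⟨c, hac, hbc⟩ := S.directed a b
    refine ⟨c, fa.comp (S.p hac) * fb.comp (S.p hbc), ?_⟩
    rw [S.comp_proj_eq_comp_proj hac fa, S.comp_proj_eq_comp_proj hbc fb]
    rfl
  add_mem' := by
    rintro f g ⟨a, fa, rfl⟩ ⟨b, fb, rfl⟩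
    obtain ⟨c, hac, hbc⟩ := S.directed a b
    refine ⟨c, fa.comp (S.p hac) + fb.comp (S.p hbc), ?_⟩
    rw [S.comp_proj_eq_comp_proj hac fa, S.comp_proj_eq_comp_proj hbc fb]
    rfl
  algebraMap_mem' c := ⟨Classical.choice S.idx_nonempty, algebraMap ℂ _ c, rfl⟩
  star_mem' := by
    rintro f ⟨a, fa, rfl⟩
    exact ⟨a, star fa, rfl⟩

theorem stageSubalgebra_separatesPoints : S.stageSubalgebra.SeparatesPoints := by
  have := S.compactX
  have := S.t2X
  intro x y hxy
  obtain ⟨a, ha⟩ : ∃ a, x.1 a ≠ y.1 a := by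
    by_contra! hall
    exact hxy (Subtype.ext (funext hall))
  obtain ⟨u, hux, huy, -⟩ := exists_continuous_zero_one_of_isClosed
    (isClosed_singleton (x := x.1 a)) (isClosed_singleton (x := y.1 a))
    (Set.disjoint_singleton.mpr ha)
  let fa : C(S.X a, ℂ) := ContinuousMap.mk Complex.ofReal Complex.continuous_ofReal |>.comp u
  refine ⟨fa.comp (S.proj a), ⟨_, ⟨a, fa, rfl⟩, rfl⟩, ?_⟩
  simp [fa, proj, hux (Set.mem_singleton _), huy (Set.mem_singleton _)]

theorem exists_norm_sub_comp_proj_lt (f : C(S.Limit, ℂ)) {ε : ℝ} (hε : 0 < ε) :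
    ∃ (a : S.A) (fa : C(S.X a, ℂ)), ∀ x, ‖f x - fa (S.proj a x)‖ < ε := by
  have hf : f ∈ S.stageSubalgebra.topologicalClosure := by
    rw [ContinuousMap.starSubalgebra_topologicalClosure_eq_top_of_separatesPoints _
      S.stageSubalgebra_separatesPoints]
    trivial
  obtain ⟨_, ⟨a, fa, rfl⟩, hdist⟩ := Metric.mem_closure_iff.mp hf ε hε
  exact ⟨a, fa, fun x => (dist_eq_norm (f x) _ ▸
    ContinuousMap.dist_apply_le_dist (f := f) (g := fa.comp (S.proj a)) x).trans_lt hdist⟩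

end InvSystemCH

theorem SatisfiesStarN.of_forall_approx_comp {n : ℕ} {Y ι : Type*} [TopologicalSpace Y]
    {Z : ι → Type*} [∀ i, TopologicalSpace (Z i)] (π : ∀ i, C(Y, Z i))
    (hZ : ∀ i, SatisfiesStarN n (Z i))
    (happrox : ∀ (f : C(Y, ℂ)) (ε : ℝ), 0 < ε →
      ∃ (i : ι) (fi : C(Z i, ℂ)), ∀ y, ‖f y - fi (π i y)‖ < ε) :
    SatisfiesStarN n Y := by
  intro f ε hε
  obtain ⟨i, fi, hfi⟩ := happrox f (ε / 2) (half_pos hε)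
  obtain ⟨gi, hgi⟩ := hZ i fi (ε / 2) (half_pos hε)
  refine ⟨gi.comp (π i), fun y => ?_⟩
  calc ‖f y - gi (π i y) ^ n‖
      = ‖(f y - fi (π i y)) + (fi (π i y) - gi (π i y) ^ n)‖ := by rw [sub_add_sub_cancel]
    _ ≤ ‖f y - fi (π i y)‖ + ‖fi (π i y) - gi (π i y) ^ n‖ := norm_add_le _ _
    _ < ε / 2 + ε / 2 := add_lt_add (hfi y) (hgi _)
    _ = ε := add_halves ε

theorem satisfiesStarN_limit_of_inverseSystem_general
    (n : ℕ) (S : InvSystemCH.{u})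
    (hS : ∀ a : S.A, SatisfiesStarN n (S.X a)) :
    SatisfiesStarN n S.Limit :=
  .of_forall_approx_comp S.proj hS fun f _ hε => S.exists_norm_sub_comp_proj_lt f hε

/-- if every space of an inverse system of compact Hausdorff spaces
satisfies condition `(*)ₙ`, then so does the limit space. -/
theorem satisfiesStarN_limit_of_inverseSystem
    (n : ℕ) (hn : 2 ≤ n) (S : InvSystemCH.{u})
    (hS : ∀ a : S.A, SatisfiesStarN n (S.X a)) :
    SatisfiesStarN n S.Limit :=
  satisfiesStarN_limit_of_inverseSystem_general n S hS
end

section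
/- Fix an integer n ≥ 2 and an infinite cardinal τ. Let f : X → Y be a continuous map, where X is a compact Hausdorff space satisfying condition (*)_n and Y is a compact Hausdorff space of weight ≤ τ. Then there exist a compact Hausdorff space Z satisfying condition (*)_n and of weight ≤ τ, and continuous maps π : X → Z and p : Z → Y, such that f = p ∘ π. -/
universe u

open Cardinal

/-- A topological space has weight `≤ τ` if its topology admits a basis of
cardinality `≤ τ`. -/
def HasWeightLE (Y : Type u) [TopologicalSpace Y] (τ : Cardinal.{u}) : Prop :=
  ∃ B : Set (Set Y), TopologicalSpace.IsTopologicalBasis B ∧ #B ≤ τ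

/-! ### Auxiliary constructions -/

section Aux

open Set TopologicalSpace

/-- A compact Hausdorff space of weight `≤ τ` admits a separating family of at most `τ`
continuous complex-valued functions. -/
lemma exists_separating_family (Y : Type u) [TopologicalSpace Y] [CompactSpace Y] [T2Space Y]
    (τ : Cardinal.{u}) (hτ : ℵ₀ ≤ τ) (hY : HasWeightLE Y τ) :
    ∃ E : Set C(Y, ℂ), #E ≤ τ ∧ ∀ y y' : Y, (∀ u ∈ E, u y = u y') → y = y' := by
  classical
  obtain ⟨B, hB, hBcard⟩ := hY
  have key : ∀ p : ↥B × ↥B, ∃ u : C(Y, ℝ),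
      closure p.1.1 ⊆ p.2.1 → (∀ y ∈ p.1.1, u y = 0) ∧ (∀ y ∉ p.2.1, u y = 1) := by
    rintro ⟨⟨U, hU⟩, ⟨V, hV⟩⟩
    by_cases h : closure U ⊆ V
    · obtain ⟨u, hu0, hu1, -⟩ := exists_continuous_zero_one_of_isClosed
        (isClosed_closure (s := U)) (isClosed_compl_iff.mpr (hB.isOpen hV))
        (by rw [Set.disjoint_compl_right_iff_subset]; exact h)
      exact ⟨u, fun _ => ⟨fun y hy => hu0 (subset_closure hy), fun y hy => hu1 hy⟩⟩
    · exact ⟨0, fun h' => absurd h' h⟩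
  choose u hu using key
  set c : C(ℝ, ℂ) := ⟨Complex.ofReal, Complex.continuous_ofReal⟩ with hc
  refine ⟨Set.range (fun p : ↥B × ↥B => c.comp (u p)), ?_, ?_⟩
  · refine le_trans mk_range_le ?_
    rw [Cardinal.mk_prod, Cardinal.lift_id]
    calc #B * #B ≤ τ * τ := mul_le_mul' hBcard hBcard
    _ = τ := Cardinal.mul_eq_self hτ
  · intro y y' hyy'
    by_contra hne
    have h1 : ({y'}ᶜ : Set Y) ∈ nhds y :=
      (isOpen_compl_singleton).mem_nhds (by simpa using Ne.symm hne ∘ Eq.symm ∘ id)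
    obtain ⟨V, hVB, hyV, hVc⟩ := hB.exists_closure_subset h1
    obtain ⟨U, hUB, hyU, hUc⟩ := hB.exists_closure_subset ((hB.isOpen hVB).mem_nhds hyV)
    have hy'V : y' ∉ V := fun hy' => (hVc (subset_closure hy')) rfl
    have := hyy' _ (Set.mem_range_self (⟨⟨U, hUB⟩, ⟨V, hVB⟩⟩ : ↥B × ↥B))
    obtain ⟨h0, h1'⟩ := hu (⟨⟨U, hUB⟩, ⟨V, hVB⟩⟩ : ↥B × ↥B) hUc
    have e0 : u (⟨⟨U, hUB⟩, ⟨V, hVB⟩⟩ : ↥B × ↥B) y = 0 := h0 y hyU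
    have e1 : u (⟨⟨U, hUB⟩, ⟨V, hVB⟩⟩ : ↥B × ↥B) y' = 1 := h1' y' hy'V
    rw [ContinuousMap.comp_apply, ContinuousMap.comp_apply, e0, e1] at this
    simp [hc] at this

variable {X : Type u} [TopologicalSpace X]

/-- One closure step: add sums, products, stars and `root`-values. -/
def stepSet (root : C(X, ℂ) → ℕ → C(X, ℂ)) (s : Set C(X, ℂ)) : Set C(X, ℂ) :=
  s ∪ Set.image2 (· + ·) s s ∪ Set.image2 (· * ·) s s ∪ (star '' s)
    ∪ Set.range (fun p : s × ℕ => root p.1.1 p.2)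

lemma subset_stepSet (root : C(X, ℂ) → ℕ → C(X, ℂ)) (s : Set C(X, ℂ)) : s ⊆ stepSet root s :=
  fun _ h => Or.inl (Or.inl (Or.inl (Or.inl h)))

/-- The countable iteration of `stepSet`. -/
def iterSet (root : C(X, ℂ) → ℕ → C(X, ℂ)) (s0 : Set C(X, ℂ)) : Set C(X, ℂ) :=
  ⋃ k : ℕ, (stepSet root)^[k] s0

lemma iter_mono (root : C(X, ℂ) → ℕ → C(X, ℂ)) (s0 : Set C(X, ℂ)) :
    Monotone (fun k => (stepSet root)^[k] s0) := by
  apply monotone_nat_of_le_succ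
  intro k
  rw [Function.iterate_succ_apply']
  exact subset_stepSet _ _

lemma base_subset_iterSet (root : C(X, ℂ) → ℕ → C(X, ℂ)) (s0 : Set C(X, ℂ)) :
    s0 ⊆ iterSet root s0 :=
  Set.subset_iUnion_of_subset 0 (by simp [Function.iterate_zero])

lemma exists_common_level (root : C(X, ℂ) → ℕ → C(X, ℂ)) (s0 : Set C(X, ℂ)) {g h : C(X, ℂ)}
    (hg : g ∈ iterSet root s0) (hh : h ∈ iterSet root s0) :
    ∃ k, g ∈ (stepSet root)^[k] s0 ∧ h ∈ (stepSet root)^[k] s0 := by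
  obtain ⟨j, hj⟩ := Set.mem_iUnion.mp hg
  obtain ⟨l, hl⟩ := Set.mem_iUnion.mp hh
  exact ⟨max j l, iter_mono root s0 (le_max_left j l) hj,
    iter_mono root s0 (le_max_right j l) hl⟩

lemma stepSet_subset_iterSet (root : C(X, ℂ) → ℕ → C(X, ℂ)) (s0 : Set C(X, ℂ)) (k : ℕ) :
    stepSet root ((stepSet root)^[k] s0) ⊆ iterSet root s0 := by
  intro g hg
  exact Set.mem_iUnion.mpr ⟨k + 1, by rwa [Function.iterate_succ_apply']⟩

lemma add_mem_iterSet (root : C(X, ℂ) → ℕ → C(X, ℂ)) (s0 : Set C(X, ℂ)) {g h : C(X, ℂ)}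
    (hg : g ∈ iterSet root s0) (hh : h ∈ iterSet root s0) : g + h ∈ iterSet root s0 := by
  obtain ⟨k, h1, h2⟩ := exists_common_level root s0 hg hh
  exact stepSet_subset_iterSet root s0 k
    (Or.inl (Or.inl (Or.inl (Or.inr (Set.mem_image2_of_mem h1 h2)))))

lemma mul_mem_iterSet (root : C(X, ℂ) → ℕ → C(X, ℂ)) (s0 : Set C(X, ℂ)) {g h : C(X, ℂ)}
    (hg : g ∈ iterSet root s0) (hh : h ∈ iterSet root s0) : g * h ∈ iterSet root s0 := by
  obtain ⟨k, h1, h2⟩ := exists_common_level root s0 hg hh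
  exact stepSet_subset_iterSet root s0 k
    (Or.inl (Or.inl (Or.inr (Set.mem_image2_of_mem h1 h2))))

lemma star_mem_iterSet (root : C(X, ℂ) → ℕ → C(X, ℂ)) (s0 : Set C(X, ℂ)) {g : C(X, ℂ)}
    (hg : g ∈ iterSet root s0) : star g ∈ iterSet root s0 := by
  obtain ⟨k, hk⟩ := Set.mem_iUnion.mp hg
  exact stepSet_subset_iterSet root s0 k (Or.inl (Or.inr ⟨g, hk, rfl⟩))

lemma root_mem_iterSet (root : C(X, ℂ) → ℕ → C(X, ℂ)) (s0 : Set C(X, ℂ)) {g : C(X, ℂ)}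
    (hg : g ∈ iterSet root s0) (m : ℕ) : root g m ∈ iterSet root s0 := by
  obtain ⟨k, hk⟩ := Set.mem_iUnion.mp hg
  exact stepSet_subset_iterSet root s0 k (Or.inr ⟨(⟨⟨g, hk⟩, m⟩ : ((stepSet root)^[k] s0) × ℕ), rfl⟩)

lemma mk_stepSet_le (root : C(X, ℂ) → ℕ → C(X, ℂ)) (s : Set C(X, ℂ)) (τ : Cardinal.{u})
    (hτ : ℵ₀ ≤ τ) (hs : #s ≤ τ) : #(stepSet root s) ≤ τ := by
  have hττ : τ * τ ≤ τ := (Cardinal.mul_eq_self hτ).le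
  have h2 : #(Set.image2 (· + ·) s s) ≤ τ :=
    (Cardinal.mk_image2_le).trans ((mul_le_mul' hs hs).trans hττ)
  have h3 : #(Set.image2 (· * ·) s s) ≤ τ :=
    (Cardinal.mk_image2_le).trans ((mul_le_mul' hs hs).trans hττ)
  have h4 : #(star '' s) ≤ τ := Cardinal.mk_image_le.trans hs
  have h5 : #(Set.range (fun p : s × ℕ => root p.1.1 p.2)) ≤ τ := by
    refine Cardinal.mk_range_le.trans ?_
    rw [Cardinal.mk_prod, Cardinal.lift_uzero, Cardinal.mk_nat, Cardinal.lift_aleph0]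
    exact (mul_le_mul' hs hτ).trans hττ
  unfold stepSet
  refine (Cardinal.mk_union_le _ _).trans (Cardinal.add_le_of_le hτ ?_ h5)
  refine (Cardinal.mk_union_le _ _).trans (Cardinal.add_le_of_le hτ ?_ h4)
  refine (Cardinal.mk_union_le _ _).trans (Cardinal.add_le_of_le hτ ?_ h3)
  exact (Cardinal.mk_union_le _ _).trans (Cardinal.add_le_of_le hτ hs h2)

lemma mk_iterSet_le (root : C(X, ℂ) → ℕ → C(X, ℂ)) (s0 : Set C(X, ℂ)) (τ : Cardinal.{u})
    (hτ : ℵ₀ ≤ τ) (hs : #s0 ≤ τ) : #(iterSet root s0) ≤ τ := by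
  have hlevel : ∀ k, #((stepSet root)^[k] s0) ≤ τ := by
    intro k
    induction k with
    | zero => simpa using hs
    | succ k ih => rw [Function.iterate_succ_apply']; exact mk_stepSet_le root _ τ hτ ih
  have h := Cardinal.mk_iUnion_le_lift (fun k : ℕ => (stepSet root)^[k] s0)
  rw [Cardinal.lift_uzero] at h
  refine le_trans h ?_
  refine le_trans (mul_le_mul' ?_ ?_) (Cardinal.mul_eq_self hτ).le
  · simpa using hτ
  · exact ciSup_le' fun k => by simpa [Cardinal.lift_uzero] using hlevel k

end Aux

set_option maxHeartbeats 3000000 in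
/-- any continuous map `f` from a compact Hausdorff space `X` satisfying
condition `(*)ₙ` to a compact Hausdorff space `Y` of weight `≤ τ` factors as `f = p ∘ π`
through a compact Hausdorff space `Z` of weight `≤ τ` satisfying `(*)ₙ`. -/
theorem exists_starN_factorization
    (n : ℕ) (hn : 2 ≤ n) (τ : Cardinal.{u}) (hτ : ℵ₀ ≤ τ)
    (X Y : Type u) [TopologicalSpace X] [CompactSpace X] [T2Space X]
    [TopologicalSpace Y] [CompactSpace Y] [T2Space Y]
    (hX : SatisfiesStarN n X) (hY : HasWeightLE Y τ) (f : C(X, Y)) :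
    ∃ (Z : Type u) (tZ : TopologicalSpace Z),
      @CompactSpace Z tZ ∧ @T2Space Z tZ ∧ @SatisfiesStarN n Z tZ ∧ @HasWeightLE Z tZ τ ∧
      ∃ (π : @ContinuousMap X Z _ tZ) (p : @ContinuousMap Z Y tZ _),
        ∀ x : X, p (π x) = f x := by
  classical
  obtain ⟨E, hEcard, hEsep⟩ := exists_separating_family Y τ hτ hY
  obtain ⟨D, hDc, hDd⟩ := TopologicalSpace.exists_countable_dense ℂ
  -- approximate n-th roots
  have hroot : ∀ (g : C(X, ℂ)) (m : ℕ), ∃ h : C(X, ℂ), ∀ x, ‖g x - h x ^ n‖ < 1 / (m + 1) :=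
    fun g m => hX g (1 / (m + 1)) (by positivity)
  choose root hrootspec using hroot
  -- the base set and its closure
  set s0 : Set C(X, ℂ) :=
    ((fun u : C(Y, ℂ) => u.comp f) '' E) ∪ Set.range (fun d : D => ContinuousMap.const X (d : ℂ))
    with hs0
  set SS : Set C(X, ℂ) := iterSet root s0 with hSS
  have hSScard : #SS ≤ τ := by
    refine mk_iterSet_le root s0 τ hτ ?_
    refine (Cardinal.mk_union_le _ _).trans (Cardinal.add_le_of_le hτ ?_ ?_)
    · exact Cardinal.mk_image_le.trans hEcard
    · refine le_trans ?_ hτ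
      have : #(Set.range fun d : D => ContinuousMap.const X (d : ℂ)) ≤ Cardinal.lift.{u} #D := by
        simpa using Cardinal.mk_range_le_lift (f := fun d : D => ContinuousMap.const X (d : ℂ))
      refine this.trans ?_
      have : #D ≤ ℵ₀ := hDc.le_aleph0
      simpa using Cardinal.lift_le.{u}.mpr this
  -- the evaluation map into the product
  set ι := ↥SS with hι
  set Φ : X → (ι → ℂ) := fun x g => (g : C(X, ℂ)) x with hΦdef
  have hΦ : Continuous Φ := continuous_pi fun g => (g : C(X, ℂ)).continuous
  set Z : Set (ι → ℂ) := Set.range Φ with hZ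
  haveI hZcompact : CompactSpace ↥Z := isCompact_iff_compactSpace.mp (isCompact_range hΦ)
  -- the projection
  set π0 : X → ↥Z := fun x => ⟨Φ x, Set.mem_range_self x⟩ with hπ0
  have hπ0cont : Continuous π0 := hΦ.subtype_mk _
  have hπ0surj : Function.Surjective π0 := by
    rintro ⟨v, x, hx⟩; exact ⟨x, Subtype.ext hx⟩
  -- membership of basic functions
  have hcompmem : ∀ u ∈ E, u.comp f ∈ SS :=
    fun u hu => base_subset_iterSet root s0 (Or.inl ⟨u, hu, rfl⟩)
  have hconstmem : ∀ d ∈ D, ContinuousMap.const X d ∈ SS :=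
    fun d hd => base_subset_iterSet root s0 (Or.inr ⟨⟨d, hd⟩, rfl⟩)
  -- points with same image under Φ have the same f-value
  have hfiber : ∀ x x' : X, Φ x = Φ x' → f x = f x' := by
    intro x x' h
    refine hEsep _ _ fun u hu => ?_
    have := congrFun h (⟨u.comp f, hcompmem u hu⟩ : ι)
    simpa [hΦdef] using this
  -- the map p
  set p0 : ↥Z → Y := fun z => f (Classical.choose z.2) with hp0
  have hp0π : ∀ x, p0 (π0 x) = f x := by
    intro x
    exact hfiber _ _ (Classical.choose_spec (π0 x).2)
  have hp0cont : Continuous p0 := by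
    have hq : Topology.IsQuotientMap π0 := (hπ0cont.isClosedMap).isQuotientMap hπ0cont hπ0surj
    rw [hq.continuous_iff]
    have : p0 ∘ π0 = f := funext hp0π
    rw [this]
    exact f.continuous
  -- coordinate functions on Z
  set coordZ : ι → C(↥Z, ℂ) :=
    fun g => ⟨fun z => z.1 g, (continuous_apply g).comp continuous_subtype_val⟩ with hcoordZ
  have coordZ_eq : ∀ (g : ι) (x : X), coordZ g (π0 x) = (g : C(X, ℂ)) x := fun g x => rfl
  have coordZ_apply : ∀ (g : ι) (z : ↥Z), coordZ g z = z.1 g := fun g z => rfl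
  -- closure properties of the coordinate family
  have hext : ∀ (g h : ι), ((g : C(X, ℂ)) = (h : C(X, ℂ))) → coordZ g = coordZ h := by
    intro g h hgh; ext z; simp [coordZ_apply, Subtype.ext hgh]
  have key_eq : ∀ (F : C(↥Z, ℂ)) (g : C(X, ℂ)) (hg : g ∈ SS),
      (∀ x : X, F (π0 x) = g x) → F = coordZ ⟨g, hg⟩ := by
    intro F g hg hFg
    ext z
    obtain ⟨x, hx⟩ := z.2
    have hz : z = π0 x := Subtype.ext hx.symm
    rw [hz, hFg x, coordZ_eq]
  have hadd : ∀ g h : ι, ∃ k : ι, coordZ g + coordZ h = coordZ k := by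
    intro g h
    refine ⟨⟨(g : C(X, ℂ)) + h, add_mem_iterSet root s0 g.2 h.2⟩, ?_⟩
    exact key_eq _ _ _ fun x => by simp [coordZ_eq]
  have hmul : ∀ g h : ι, ∃ k : ι, coordZ g * coordZ h = coordZ k := by
    intro g h
    refine ⟨⟨(g : C(X, ℂ)) * h, mul_mem_iterSet root s0 g.2 h.2⟩, ?_⟩
    exact key_eq _ _ _ fun x => by simp [coordZ_eq]
  have hstar : ∀ g : ι, ∃ k : ι, star (coordZ g) = coordZ k := by
    intro g
    refine ⟨⟨star (g : C(X, ℂ)), star_mem_iterSet root s0 g.2⟩, ?_⟩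
    exact key_eq _ _ _ fun x => by simp [coordZ_eq]
  have hconst : ∀ d ∈ D, ∃ k : ι, (ContinuousMap.const ↥Z d) = coordZ k := by
    intro d hd
    refine ⟨⟨ContinuousMap.const X d, hconstmem d hd⟩, ?_⟩
    exact key_eq _ _ _ fun x => by simp
  -- the range of coordZ and its closure
  set Shat : Set C(↥Z, ℂ) := Set.range coordZ with hShat
  -- closure of Shat contains the star algebra generated by it
  have hclosure_mem : ∀ a : C(↥Z, ℂ), (∀ δ : ℝ, 0 < δ → ∃ g : ι, dist a (coordZ g) < δ) →
      a ∈ closure Shat := by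
    intro a ha
    rw [Metric.mem_closure_iff]
    intro δ hδ
    obtain ⟨g, hg⟩ := ha δ hδ
    exact ⟨coordZ g, Set.mem_range_self g, hg⟩
  have hclosure_mem' : ∀ a : C(↥Z, ℂ), a ∈ closure Shat →
      ∀ δ : ℝ, 0 < δ → ∃ g : ι, dist a (coordZ g) < δ := by
    intro a ha δ hδ
    obtain ⟨b, ⟨g, rfl⟩, hb⟩ := Metric.mem_closure_iff.mp ha δ hδ
    exact ⟨g, hb⟩
  have hA_sub : (StarAlgebra.adjoin ℂ Shat : Set C(↥Z, ℂ)) ⊆ closure Shat := by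
    intro a ha
    induction ha using StarAlgebra.adjoin_induction with
    | mem x hx => exact subset_closure hx
    | algebraMap r =>
      refine hclosure_mem _ fun δ hδ => ?_
      obtain ⟨d, hd, hdist⟩ := hDd.exists_dist_lt r hδ
      obtain ⟨k, hk⟩ := hconst d hd
      refine ⟨k, lt_of_le_of_lt ?_ hdist⟩
      rw [← hk]
      refine (ContinuousMap.dist_le dist_nonneg).mpr fun z => ?_
      have hz : (algebraMap ℂ C(↥Z, ℂ) r) z = r := rfl
      have hz' : (ContinuousMap.const (↥Z) d) z = d := rfl
      rw [hz, hz']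
    | add x y hx hy ihx ihy =>
      refine hclosure_mem _ fun δ hδ => ?_
      obtain ⟨g, hg⟩ := hclosure_mem' x ihx (δ / 2) (by positivity)
      obtain ⟨h, hh⟩ := hclosure_mem' y ihy (δ / 2) (by positivity)
      obtain ⟨k, hk⟩ := hadd g h
      refine ⟨k, ?_⟩
      rw [← hk]
      calc dist (x + y) (coordZ g + coordZ h) ≤ dist x (coordZ g) + dist y (coordZ h) :=
            dist_add_add_le _ _ _ _
      _ < δ / 2 + δ / 2 := add_lt_add hg hh
      _ = δ := by ring
    | mul x y hx hy ihx ihy =>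
      refine hclosure_mem _ fun δ hδ => ?_
      set M : ℝ := ‖x‖ + ‖y‖ + 2 with hM
      have hM0 : 0 < M := by positivity
      set δ' : ℝ := min 1 (δ / (2 * M)) with hδ'
      have hδ'0 : 0 < δ' := lt_min one_pos (by positivity)
      obtain ⟨g, hg⟩ := hclosure_mem' x ihx δ' hδ'0
      obtain ⟨h, hh⟩ := hclosure_mem' y ihy δ' hδ'0
      obtain ⟨k, hk⟩ := hmul g h
      refine ⟨k, ?_⟩
      rw [← hk]
      have hgnorm : ‖coordZ g‖ ≤ ‖x‖ + δ' := by
        have h0 : coordZ g = x - (x - coordZ g) := by ring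
        rw [h0]
        refine (norm_sub_le _ _).trans ?_
        have : ‖x - coordZ g‖ < δ' := by rw [← dist_eq_norm]; exact hg
        linarith
      have key : dist (x * y) (coordZ g * coordZ h) ≤ ‖x - coordZ g‖ * ‖y‖
          + ‖coordZ g‖ * ‖y - coordZ h‖ := by
        rw [dist_eq_norm]
        have : x * y - coordZ g * coordZ h = (x - coordZ g) * y + coordZ g * (y - coordZ h) := by
          ring
        rw [this]
        exact (norm_add_le _ _).trans (add_le_add (norm_mul_le _ _) (norm_mul_le _ _))
      have hd1 : ‖x - coordZ g‖ < δ' := by rw [← dist_eq_norm]; exact hg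
      have hd2 : ‖y - coordZ h‖ < δ' := by rw [← dist_eq_norm]; exact hh
      have hδ'1 : δ' ≤ 1 := min_le_left _ _
      have hδ'2 : δ' ≤ δ / (2 * M) := min_le_right _ _
      have hbound : dist (x * y) (coordZ g * coordZ h) < δ := by
        have h1 : ‖x - coordZ g‖ * ‖y‖ ≤ δ' * ‖y‖ :=
          mul_le_mul_of_nonneg_right hd1.le (norm_nonneg _)
        have h2 : ‖coordZ g‖ * ‖y - coordZ h‖ ≤ (‖x‖ + 1) * δ' := by
          refine mul_le_mul (by linarith) hd2.le (norm_nonneg _) (by positivity)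
        have h3 : δ' * ‖y‖ + (‖x‖ + 1) * δ' ≤ δ' * M := by
          have : δ' * ‖y‖ + (‖x‖ + 1) * δ' = δ' * (‖x‖ + ‖y‖ + 1) := by ring
          rw [this, hM]
          nlinarith [norm_nonneg x, norm_nonneg y]
        have h4 : δ' * M ≤ δ / 2 := by
          rw [hδ']
          calc min 1 (δ / (2 * M)) * M ≤ (δ / (2 * M)) * M :=
                mul_le_mul_of_nonneg_right (min_le_right _ _) hM0.le
          _ = δ / 2 := by field_simp
        linarith [key]
      exact hbound
    | star x hx ih =>
      refine hclosure_mem _ fun δ hδ => ?_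
      obtain ⟨g, hg⟩ := hclosure_mem' x ih δ hδ
      obtain ⟨k, hk⟩ := hstar g
      refine ⟨k, ?_⟩
      rw [← hk]
      rwa [dist_eq_norm, ← star_sub, norm_star, ← dist_eq_norm]
  -- Shat separates points of Z
  have hsep : (StarAlgebra.adjoin ℂ Shat).SeparatesPoints := by
    intro z w hzw
    have : z.1 ≠ w.1 := fun h => hzw (Subtype.ext h)
    obtain ⟨i, hi⟩ := Function.ne_iff.mp this
    exact ⟨coordZ i, ⟨coordZ i,
      StarAlgebra.subset_adjoin ℂ Shat (Set.mem_range_self i), rfl⟩, hi⟩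
  have hSW := ContinuousMap.starSubalgebra_topologicalClosure_eq_top_of_separatesPoints
    (StarAlgebra.adjoin ℂ Shat) hsep
  have hdense : ∀ φ : C(↥Z, ℂ), φ ∈ closure Shat := by
    intro φ
    have h1 : φ ∈ (StarAlgebra.adjoin ℂ Shat).topologicalClosure := by
      rw [hSW]; exact StarSubalgebra.mem_top
    have h2 : φ ∈ closure (StarAlgebra.adjoin ℂ Shat : Set C(↥Z, ℂ)) := h1
    have h3 := closure_mono hA_sub h2
    rwa [closure_closure] at h3
  -- SatisfiesStarN for Z
  have hZstar : SatisfiesStarN n ↥Z := by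
    intro φ ε hε
    obtain ⟨g, hg⟩ := hclosure_mem' φ (hdense φ) (ε / 2) (by positivity)
    obtain ⟨m, hm⟩ := exists_nat_one_div_lt (by positivity : (0 : ℝ) < ε / 2)
    set h : C(X, ℂ) := root (g : C(X, ℂ)) m with hh
    have hmem : h ∈ SS := root_mem_iterSet root s0 g.2 m
    refine ⟨coordZ ⟨h, hmem⟩, ?_⟩
    intro z
    obtain ⟨x, hx⟩ := z.2
    have hz : z = π0 x := Subtype.ext hx.symm
    have e1 : coordZ (⟨h, hmem⟩ : ι) z = h x := by rw [hz]; exact coordZ_eq _ _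
    have e2 : coordZ g z = (g : C(X, ℂ)) x := by rw [hz]; exact coordZ_eq _ _
    have b1 : ‖φ z - (g : C(X, ℂ)) x‖ < ε / 2 := by
      rw [← e2, ← dist_eq_norm]
      exact lt_of_le_of_lt (ContinuousMap.dist_apply_le_dist z) hg
    have b2 : ‖(g : C(X, ℂ)) x - h x ^ n‖ < ε / 2 :=
      lt_trans (hrootspec (g : C(X, ℂ)) m x) hm
    rw [e1]
    calc ‖φ z - h x ^ n‖ ≤ ‖φ z - (g : C(X, ℂ)) x‖ + ‖(g : C(X, ℂ)) x - h x ^ n‖ := by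
          have : φ z - h x ^ n = (φ z - (g : C(X, ℂ)) x) + ((g : C(X, ℂ)) x - h x ^ n) := by ring
          rw [this]; exact norm_add_le _ _
    _ < ε / 2 + ε / 2 := add_lt_add b1 b2
    _ = ε := by ring
  -- weight of Z
  have hZweight : HasWeightLE ↥Z τ := by
    have hBc := TopologicalSpace.isBasis_countableBasis ℂ
    have hBpi := isTopologicalBasis_pi
      (ι := ι) (X := fun _ => ℂ) (fun _ => hBc)
    set Bpi : Set (Set (ι → ℂ)) := { S | ∃ (U : ι → Set ℂ) (F : Finset ι),
      (∀ i, i ∈ F → U i ∈ TopologicalSpace.countableBasis ℂ) ∧ S = (F : Set ι).pi U } with hBpidef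
    set BZ : Set (Set ↥Z) := (Set.preimage (Subtype.val : ↥Z → (ι → ℂ))) '' Bpi with hBZ
    have hBZbasis : TopologicalSpace.IsTopologicalBasis BZ :=
      isTopologicalBasis_subtype hBpi (· ∈ Z)
    refine ⟨BZ, hBZbasis, ?_⟩
    have hcard1 : #BZ ≤ #Bpi := Cardinal.mk_image_le
    -- encode basic sets by lists
    set Bc := TopologicalSpace.countableBasis ℂ with hBcdef
    set enc : List (ι × ↥Bc) → Set (ι → ℂ) :=
      fun l => { x | ∀ p ∈ l, x p.1 ∈ (p.2 : Set ℂ) } with henc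
    have hsub : Bpi ⊆ Set.range enc := by
      rintro S ⟨U, F, hU, rfl⟩
      refine ⟨F.toList.attach.map
        (fun i => (i.1, ⟨U i.1, hU i.1 (Finset.mem_toList.mp i.2)⟩)), ?_⟩
      ext x
      simp only [henc, Set.mem_setOf_eq, List.mem_map, List.mem_attach, true_and,
        Set.mem_pi, Finset.mem_coe]
      constructor
      · intro hx i hi
        exact hx (i, ⟨U i, hU i hi⟩) ⟨⟨i, Finset.mem_toList.mpr hi⟩, rfl⟩
      · rintro hx p ⟨⟨i, hi⟩, rfl⟩
        exact hx i (Finset.mem_toList.mp hi)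
    have hcard2 : #Bpi ≤ #(List (ι × ↥Bc)) :=
      (Cardinal.mk_le_mk_of_subset hsub).trans Cardinal.mk_range_le
    have hcard3 : #(List (ι × ↥Bc)) ≤ max ℵ₀ #(ι × ↥Bc) := Cardinal.mk_list_le_max _
    have hcard4 : #(ι × ↥Bc) ≤ τ := by
      rw [Cardinal.mk_prod, Cardinal.lift_uzero]
      have h1 : #ι ≤ τ := hSScard
      have h2 : Cardinal.lift.{u} #(↥Bc) ≤ ℵ₀ := by
        have : #(↥Bc) ≤ ℵ₀ :=
          (TopologicalSpace.countable_countableBasis ℂ).le_aleph0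
        simpa using Cardinal.lift_le.{u}.mpr this
      calc #ι * Cardinal.lift.{u} #(↥Bc) ≤ τ * ℵ₀ := mul_le_mul' h1 h2
      _ ≤ τ * τ := mul_le_mul' le_rfl hτ
      _ = τ := Cardinal.mul_eq_self hτ
    exact hcard1.trans (hcard2.trans (hcard3.trans (max_le hτ hcard4)))
  -- conclude
  exact ⟨↥Z, inferInstance, hZcompact, inferInstance, hZstar, hZweight,
    ⟨π0, hπ0cont⟩, ⟨p0, hp0cont⟩, hp0π⟩
end

section
/- Fix an integer n ≥ 2 and an infinite cardinal τ. Let X be a completely regular space of weight ≤ τ satisfying condition (*)_n (in its bounded-function form). Then there exist a compact Hausdorff space Z of weight ≤ τ satisfying condition (*)_n and a topological embedding e : X → Z with dense image; that is, X has a compactification of the same weight satisfying condition (*)_n. -/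
universe u

open Cardinal BoundedContinuousFunction

/-- Condition `(*)ₙ` in its bounded-function form: every bounded continuous
complex-valued function on `Y` can be approximated in the sup-norm by `n`-th powers of
bounded continuous complex-valued functions. -/
def SatisfiesStarNBdd (n : ℕ) (Y : Type*) [TopologicalSpace Y] : Prop :=
  ∀ (f : Y →ᵇ ℂ) (ε : ℝ), 0 < ε → ∃ g : Y →ᵇ ℂ, ‖f - g ^ n‖ < ε

open Set Metric TopologicalSpace Topology

section Aux


/-- pointwise separation function from complete regularity, as a bounded continuous ℂ-valued fn -/
lemma exists_sep_bcf {X : Type u} [TopologicalSpace X] [CompletelyRegularSpace X]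
    (x : X) (W : Set X) (hW : IsOpen W) (hx : x ∈ W) :
    ∃ f : X →ᵇ ℂ, (∀ y ∉ W, f y = 0) ∧ 1 < ‖f x‖ := by
  obtain ⟨g, hgc, hgx, hgK⟩ :=
    CompletelyRegularSpace.completely_regular x Wᶜ hW.isClosed_compl (by simpa using hx)
  refine ⟨⟨⟨fun y => ((2 : ℝ) - 2 * (g y : ℝ) : ℝ), by fun_prop⟩, 4, ?_⟩, ?_, ?_⟩
  · intro y z
    have h1 : |((2:ℝ) - 2 * (g y : ℝ))| ≤ 2 := by
      have := (g y).2.1; have := (g y).2.2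
      rw [abs_le]; constructor <;> nlinarith
    have h2 : |((2:ℝ) - 2 * (g z : ℝ))| ≤ 2 := by
      have := (g z).2.1; have := (g z).2.2
      rw [abs_le]; constructor <;> nlinarith
    calc dist (((2:ℝ) - 2 * (g y : ℝ) : ℝ) : ℂ) (((2:ℝ) - 2 * (g z : ℝ) : ℝ) : ℂ)
        ≤ ‖(((2:ℝ) - 2 * (g y : ℝ) : ℝ) : ℂ)‖ + ‖(((2:ℝ) - 2 * (g z : ℝ) : ℝ) : ℂ)‖ :=
          dist_le_norm_add_norm _ _
      _ ≤ 4 := by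
          simp only [Complex.norm_real, Real.norm_eq_abs]
          linarith
  · intro y hy
    have h : g y = 1 := hgK (by simpa using hy)
    show ((((2:ℝ) - 2 * (g y : ℝ)) : ℝ) : ℂ) = 0
    rw [h]; norm_num
  · show (1:ℝ) < ‖((((2:ℝ) - 2 * (g x : ℝ)) : ℝ) : ℂ)‖
    rw [hgx]; norm_num

lemma exists_sep_family {X : Type u} [TopologicalSpace X] [T35Space X]
    (τ : Cardinal.{u}) (hτ : ℵ₀ ≤ τ) (hwX : HasWeightLE X τ) :
    ∃ S₀ : Set (X →ᵇ ℂ), #S₀ ≤ τ ∧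
      ∀ (x : X) (W : Set X), IsOpen W → x ∈ W →
        ∃ f ∈ S₀, (∀ y ∉ W, f y = 0) ∧ 1 ≤ ‖f x‖ := by
  obtain ⟨B, hB, hBcard⟩ := hwX
  classical
  set P : Set X → Set X → Prop := fun U V =>
    ∃ f : X →ᵇ ℂ, (∀ y ∉ V, f y = 0) ∧ ∀ y ∈ U, 1 ≤ ‖f y‖ with hP
  set w₀ : Set X → Set X → (X →ᵇ ℂ) := fun U V => if h : P U V then h.choose else 0 with hw₀
  refine ⟨Set.range (fun p : ↥B × ↥B => w₀ p.1 p.2), ?_, ?_⟩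
  · refine (mk_range_le).trans ?_
    have : #(↥B × ↥B) = #↥B * #↥B := by simp [Cardinal.mk_prod]
    rw [this]
    calc #↥B * #↥B ≤ τ * τ := mul_le_mul' hBcard hBcard
      _ = τ := Cardinal.mul_eq_self hτ
  · intro x W hW hx
    obtain ⟨V, hVB, hxV, hVW⟩ := hB.exists_subset_of_mem_open hx hW
    obtain ⟨f, hf0, hfx⟩ := exists_sep_bcf x V (hB.isOpen hVB) hxV
    have hO : IsOpen {y : X | 1 < ‖f y‖} :=
      isOpen_lt continuous_const (continuous_norm.comp f.continuous)
    obtain ⟨U, hUB, hxU, hUO⟩ := hB.exists_subset_of_mem_open (a := x) hfx hO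
    have hPUV : P U V := ⟨f, hf0, fun y hy => le_of_lt (hUO hy)⟩
    refine ⟨w₀ U V, ⟨(⟨⟨U, hUB⟩, ⟨V, hVB⟩⟩ : ↥B × ↥B), rfl⟩, ?_, ?_⟩
    · intro y hy
      simpa [hw₀, dif_pos hPUV] using hPUV.choose_spec.1 y (fun hyV => hy (hVW hyV))
    · simpa [hw₀, dif_pos hPUV] using hPUV.choose_spec.2 x hxU

lemma exists_closed_family {X : Type u} [TopologicalSpace X] {n : ℕ}
    (hX : SatisfiesStarNBdd n X)
    (τ : Cardinal.{u}) (hτ : ℵ₀ ≤ τ) (S₀ : Set (X →ᵇ ℂ)) (hS₀ : #S₀ ≤ τ) :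
    ∃ S : Set (X →ᵇ ℂ), S₀ ⊆ S ∧ #S ≤ τ ∧
      (∀ q₁ q₂ : ℚ, const X ((q₁ : ℂ) + (q₂ : ℂ) * Complex.I) ∈ S) ∧
      (∀ f ∈ S, star f ∈ S) ∧
      (∀ f ∈ Subring.closure S, ∀ ε : ℝ, 0 < ε → ∃ g ∈ S, ‖f - g ^ n‖ < ε) := by
  classical
  have wpos : ∀ m : ℕ, (0:ℝ) < 1 / (m + 1) := fun m => by positivity
  set w : (X →ᵇ ℂ) → ℕ → (X →ᵇ ℂ) := fun f m => (hX f (1/(m+1)) (wpos m)).choose with hw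
  have wspec : ∀ (f : X →ᵇ ℂ) (m : ℕ), ‖f - (w f m) ^ n‖ < 1/(m+1) :=
    fun f m => (hX f (1/(m+1)) (wpos m)).choose_spec
  set T : ℕ → Set (X →ᵇ ℂ) := fun k => Nat.rec
    (S₀ ∪ Set.range (fun q : ℚ × ℚ => const X ((q.1 : ℂ) + (q.2 : ℂ) * Complex.I)))
    (fun _ Tk => (Tk ∪ (star '' Tk)) ∪
      Set.range (fun p : ↥(Subring.closure Tk) × ℕ => w p.1.1 p.2)) k with hT
  have hTsucc : ∀ k, T (k+1) = (T k ∪ (star '' T k)) ∪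
      Set.range (fun p : ↥(Subring.closure (T k)) × ℕ => w p.1.1 p.2) := fun k => rfl
  have hTmono : Monotone T := by
    apply monotone_nat_of_le_succ
    intro k
    rw [hTsucc k]
    exact subset_union_left.trans' subset_union_left
  have hTcard : ∀ k, #(T k) ≤ τ := by
    intro k
    induction k with
    | zero =>
        refine (mk_union_le _ _).trans ?_
        have h1 : #(Set.range (fun q : ℚ × ℚ => const X ((q.1 : ℂ) + (q.2 : ℂ) * Complex.I))) ≤ ℵ₀ :=
          (Set.countable_range _).le_aleph0
        calc #S₀ + _ ≤ τ + τ := add_le_add hS₀ (h1.trans hτ)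
          _ = τ := Cardinal.add_eq_self hτ
    | succ k ih =>
        rw [hTsucc k]
        have hcl : #(Subring.closure (T k)) ≤ τ := by
          have e := Cardinal.mk_congr (Subring.closureEquivAdjoinInt (T k)).toEquiv
          have hle := Algebra.lift_cardinalMk_adjoin_le ℤ (T k : Set (X →ᵇ ℂ))
          rw [Cardinal.lift_uzero, Cardinal.lift_uzero] at hle
          rw [e]
          refine hle.trans ?_
          simp only [Cardinal.mk_int, Cardinal.lift_aleph0]
          exact sup_le (sup_le hτ ih) hτ
        have h2 : #(Set.range (fun p : ↥(Subring.closure (T k)) × ℕ => w p.1.1 p.2)) ≤ τ := by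
          refine mk_range_le.trans ?_
          rw [Cardinal.mk_prod, Cardinal.mk_nat, Cardinal.lift_aleph0, Cardinal.lift_uzero]
          exact (mul_le_mul' hcl hτ).trans (le_of_eq (Cardinal.mul_eq_self hτ))
        refine (mk_union_le _ _).trans ?_
        have h3 : #(T k ∪ star '' T k : Set (X →ᵇ ℂ)) ≤ τ := by
          refine (mk_union_le _ _).trans ?_
          calc #(T k) + #(star '' T k) ≤ τ + τ := add_le_add ih (mk_image_le.trans ih)
            _ = τ := Cardinal.add_eq_self hτ
        calc _ ≤ τ + τ := add_le_add h3 h2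
          _ = τ := Cardinal.add_eq_self hτ
  refine ⟨⋃ k, T k, ?_, ?_, ?_, ?_, ?_⟩
  · exact subset_union_left.trans (subset_iUnion T 0)
  · have h := mk_iUnion_le_lift T
    rw [Cardinal.lift_uzero, Cardinal.mk_nat, Cardinal.lift_aleph0] at h
    refine h.trans ?_
    have hsup : ⨆ i, Cardinal.lift.{0} #(T i) ≤ τ :=
      ciSup_le' fun i => by rw [Cardinal.lift_uzero]; exact hTcard i
    exact (mul_le_mul' hτ hsup).trans (le_of_eq (Cardinal.mul_eq_self hτ))
  · intro q₁ q₂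
    exact Set.mem_iUnion.2 ⟨0, Or.inr ⟨(q₁, q₂), rfl⟩⟩
  · intro f hf
    obtain ⟨k, hk⟩ := Set.mem_iUnion.1 hf
    exact Set.mem_iUnion.2 ⟨k+1, by rw [hTsucc k]; exact Or.inl (Or.inr ⟨f, hk, rfl⟩)⟩
  · intro f hf ε hε
    have hdir : Directed (· ≤ ·) (fun k => Subring.closure (T k)) :=
      (Monotone.directed_le fun i j hij => Subring.closure_mono (hTmono hij))
    rw [Subring.closure_iUnion] at hf
    obtain ⟨k, hk⟩ := (Subring.mem_iSup_of_directed hdir).1 hf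
    obtain ⟨m, hm⟩ := exists_nat_one_div_lt hε
    refine ⟨w f m, ?_, lt_trans (wspec f m) ?_⟩
    · refine Set.mem_iUnion.2 ⟨k+1, ?_⟩
      rw [hTsucc k]
      exact Or.inr ⟨(⟨f, hk⟩, m), rfl⟩
    · exact_mod_cast hm

lemma mk_finset_le_max (A : Type u) (τ : Cardinal.{u}) (hτ : ℵ₀ ≤ τ) (hA : #A ≤ τ) :
    #(Finset A) ≤ τ := by
  classical
  rcases isEmpty_or_nonempty A with h | h
  · exact (Cardinal.mk_le_aleph0).trans hτ
  · have hsurj : Function.Surjective (fun l : List A => l.toFinset) :=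
      fun F => ⟨F.toList, F.toList_toFinset⟩
    refine (Cardinal.mk_le_of_surjective hsurj).trans ?_
    rw [Cardinal.mk_list_eq_max_mk_aleph0]
    exact max_le hA hτ

lemma hasWeightLE_subtype_pi (S : Type u) (τ : Cardinal.{u}) (hτ : ℵ₀ ≤ τ)
    (hS : #S ≤ τ) (C : Set (S → ℂ)) : HasWeightLE (↥C) τ := by
  classical
  obtain ⟨bC, hbCcount, hbCempty, hbC⟩ := exists_countable_basis ℂ
  have hbCne : bC.Nonempty := by
    obtain ⟨V, hV, _, _⟩ := hbC.exists_subset_of_mem_open (Set.mem_univ (0:ℂ)) isOpen_univ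
    exact ⟨V, hV⟩
  obtain ⟨eb, heb⟩ := hbCcount.exists_eq_range hbCne
  have hpi := isTopologicalBasis_pi (fun _ : S => hbC)
  have hsub := isTopologicalBasis_subtype hpi (· ∈ C)
  refine ⟨_, hsub, ?_⟩
  refine (Cardinal.mk_image_le).trans ?_
  -- bound the cardinality of the pi-basis
  set Φ : (Σ F : Finset S, (↥(F : Set S) → ℕ)) → Set (S → ℂ) := fun p =>
    (p.1 : Set S).pi (fun i => if h : i ∈ (p.1 : Set S) then eb (p.2 ⟨i, h⟩) else Set.univ)
    with hΦ
  have hsubset : {Sset | ∃ (U : S → Set ℂ) (F : Finset S), (∀ i ∈ F, U i ∈ bC) ∧ Sset = (↑F : Set S).pi U} ⊆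
      Set.range Φ := by
    rintro _ ⟨U, F, hU, rfl⟩
    have hch : ∀ i : ↥(F : Set S), ∃ m : ℕ, eb m = U i.1 := by
      intro i
      have : U i.1 ∈ bC := hU i.1 i.2
      rw [heb] at this
      obtain ⟨m, hm⟩ := this
      exact ⟨m, hm⟩
    choose c hc using hch
    refine ⟨⟨F, c⟩, ?_⟩
    ext z
    simp only [Φ, Set.mem_pi]
    constructor
    · intro h i hi
      have := h i hi
      rw [dif_pos hi] at this
      rwa [hc ⟨i, hi⟩] at this
    · intro h i hi
      rw [dif_pos hi, hc ⟨i, hi⟩]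
      exact h i hi
  refine (Cardinal.mk_le_mk_of_subset hsubset).trans ?_
  refine (Cardinal.mk_range_le).trans ?_
  rw [Cardinal.mk_sigma]
  have hbound : ∀ F : Finset S, #(↥(F : Set S) → ℕ) ≤ ℵ₀ := fun F => Cardinal.mk_le_aleph0
  refine (Cardinal.sum_le_sum _ (fun _ => ℵ₀) hbound).trans ?_
  rw [Cardinal.sum_const']
  calc #(Finset S) * ℵ₀ ≤ τ * τ :=
      mul_le_mul' (mk_finset_le_max S τ hτ hS) hτ
    _ = τ := Cardinal.mul_eq_self hτ

variable {X : Type u} [TopologicalSpace X]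

/-- evaluation map into product -/
noncomputable def evalMap (S : Set (X →ᵇ ℂ)) : X → (↥S → ℂ) := fun x f => f.1 x

/-- the compactification as a subset of the product -/
def ZSet (S : Set (X →ᵇ ℂ)) : Set (↥S → ℂ) := closure (Set.range (evalMap S))

lemma continuous_evalMap (S : Set (X →ᵇ ℂ)) : Continuous (evalMap S) :=
  continuous_pi fun f => f.1.continuous

/-- the embedding into the compactification -/
noncomputable def eZ (S : Set (X →ᵇ ℂ)) : X → ZSet S :=
  fun x => ⟨evalMap S x, subset_closure (Set.mem_range_self x)⟩

lemma continuous_eZ (S : Set (X →ᵇ ℂ)) : Continuous (eZ S) :=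
  (continuous_evalMap S).subtype_mk _

lemma compactSpace_ZSet (S : Set (X →ᵇ ℂ)) : CompactSpace (ZSet S) := by
  rw [← isCompact_iff_compactSpace]
  have hK : IsCompact (Set.pi Set.univ fun f : ↥S => closedBall (0:ℂ) ‖f.1‖) :=
    isCompact_univ_pi fun f => isCompact_closedBall _ _
  have hKc : IsClosed (Set.pi Set.univ fun f : ↥S => closedBall (0:ℂ) ‖f.1‖) :=
    isClosed_set_pi fun f _ => isClosed_closedBall
  have hsub : ZSet S ⊆ Set.pi Set.univ fun f : ↥S => closedBall (0:ℂ) ‖f.1‖ := by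
    apply closure_minimal _ hKc
    rintro _ ⟨x, rfl⟩ f _
    simpa [evalMap] using f.1.norm_coe_le_norm x
  exact hK.of_isClosed_subset isClosed_closure hsub

lemma denseRange_eZ (S : Set (X →ᵇ ℂ)) : DenseRange (eZ S) := by
  intro z
  rw [closure_subtype, ← Set.range_comp]
  exact z.2

lemma isEmbedding_eZ (S : Set (X →ᵇ ℂ)) [T1Space X]
    (hsep : ∀ (x : X) (W : Set X), IsOpen W → x ∈ W →
      ∃ f ∈ S, (∀ y ∉ W, f y = 0) ∧ 1 ≤ ‖f x‖) :
    Topology.IsEmbedding (eZ S) := by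
  have hE : Topology.IsEmbedding (evalMap S) := by
    constructor
    · rw [Topology.isInducing_iff_nhds]
      intro x
      refine le_antisymm (Filter.map_le_iff_le_comap.mp
        ((continuous_evalMap S).continuousAt (x := x))) ?_
      intro W hW
      obtain ⟨W', hW'W, hW'open, hxW'⟩ := mem_nhds_iff.1 hW
      obtain ⟨f, hfS, hf0, hfx⟩ := hsep x W' hW'open hxW'
      rw [Filter.mem_comap]
      refine ⟨{u : ↥S → ℂ | 1/2 < ‖u ⟨f, hfS⟩‖}, ?_, ?_⟩
      · refine IsOpen.mem_nhds ?_ ?_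
        · exact isOpen_lt continuous_const ((continuous_apply _).norm)
        · show (1:ℝ)/2 < ‖evalMap S x ⟨f, hfS⟩‖
          show (1:ℝ)/2 < ‖f x‖
          linarith
      · intro y hy
        by_contra hyW'
        have : f y = 0 := hf0 y (fun h => hyW' (hW'W h))
        have h0 : ‖evalMap S y ⟨f, hfS⟩‖ = 0 := by simp [evalMap, this]
        have hy' : (1:ℝ)/2 < ‖evalMap S y ⟨f, hfS⟩‖ := hy
        rw [h0] at hy'
        linarith
    · intro x y hxy
      by_contra hne
      obtain ⟨f, hfS, hf0, hfx⟩ := hsep x {y}ᶜ isOpen_compl_singleton (by simpa using hne)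
      have h1 : evalMap S x ⟨f, hfS⟩ = f x := rfl
      have h2 : f y = 0 := hf0 y (by simp)
      have : f x = 0 := by
        have := congrFun hxy ⟨f, hfS⟩
        simpa [evalMap, h2] using this
      rw [this] at hfx
      norm_num at hfx
  exact Topology.IsEmbedding.of_comp (continuous_eZ S) continuous_subtype_val hE

section Star

variable (S : Set (X →ᵇ ℂ))

/-- coordinate function on Z -/
def coordZ (f : ↥S) : C(ZSet S, ℂ) :=
  ⟨fun z => z.1 f, (continuous_apply f).comp continuous_subtype_val⟩

attribute [local instance] compactSpace_ZSet

/-- restriction ring hom C(Z, ℂ) →+* (X →ᵇ ℂ) -/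
noncomputable def piHom : C(ZSet S, ℂ) →+* (X →ᵇ ℂ) where
  toFun h := (mkOfCompact h).compContinuous ⟨eZ S, continuous_eZ S⟩
  map_one' := by ext x; rfl
  map_mul' h₁ h₂ := by ext x; rfl
  map_zero' := by ext x; rfl
  map_add' h₁ h₂ := by ext x; rfl

lemma piHom_apply (h : C(ZSet S, ℂ)) (x : X) : piHom S h x = h (eZ S x) := rfl

lemma piHom_coord (f : ↥S) : piHom S (coordZ S f) = f.1 := by
  ext x; rfl

lemma piHom_const (c : ℂ) : piHom S (ContinuousMap.const _ c) = const X c := by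
  ext x; rfl

lemma piHom_star (h : C(ZSet S, ℂ)) : piHom S (star h) = star (piHom S h) := by
  ext x; rfl

lemma norm_le_piHom (u : C(ZSet S, ℂ)) (z : ZSet S) : ‖u z‖ ≤ ‖piHom S u‖ := by
  have hclosed : IsClosed {z : ZSet S | ‖u z‖ ≤ ‖piHom S u‖} :=
    isClosed_le u.continuous.norm continuous_const
  have hsub : Set.range (eZ S) ⊆ {z : ZSet S | ‖u z‖ ≤ ‖piHom S u‖} := by
    rintro _ ⟨x, rfl⟩
    show ‖u (eZ S x)‖ ≤ ‖piHom S u‖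
    rw [← piHom_apply S u x]
    exact (piHom S u).norm_coe_le_norm x
  have : closure (Set.range (eZ S)) ⊆ {z : ZSet S | ‖u z‖ ≤ ‖piHom S u‖} :=
    closure_minimal hsub hclosed
  exact this ((denseRange_eZ S) z)

end Star

set_option maxHeartbeats 1000000 in
set_option synthInstance.maxHeartbeats 1000000 in
lemma satisfiesStarN_ZSet (n : ℕ) (S : Set (X →ᵇ ℂ))
    (hconst : ∀ q₁ q₂ : ℚ, const X ((q₁:ℂ) + (q₂:ℂ) * Complex.I) ∈ S)
    (hstar : ∀ f ∈ S, star f ∈ S)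
    (hwit : ∀ f ∈ Subring.closure S, ∀ ε : ℝ, 0 < ε → ∃ g ∈ S, ‖f - g ^ n‖ < ε) :
    SatisfiesStarN n (ZSet S) := by
  classical
  haveI : CompactSpace (ZSet S) := compactSpace_ZSet S
  haveI : LocallyCompactSpace (ZSet S) := inferInstance
  have hSc_star : ∀ f ∈ Subring.closure S, star f ∈ Subring.closure S := by
    intro f hf
    induction hf using Subring.closure_induction with
    | mem x hx => exact Subring.subset_closure (hstar x hx)
    | zero => simpa using Subring.zero_mem (Subring.closure S)
    | one => simpa using Subring.one_mem (Subring.closure S)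
    | add x y hx hy hx' hy' => rw [star_add]; exact add_mem hx' hy'
    | neg x hx hx' => rw [star_neg]; exact neg_mem hx'
    | mul x y hx hy hx' hy' => rw [star_mul]; exact mul_mem hy' hx'
  set D : Subring C(ZSet S, ℂ) := (Subring.closure S).comap (piHom S) with hD
  -- every continuous function is in the closure of D
  have hDbar : ∀ u : C(ZSet S, ℂ), u ∈ closure (D : Set C(ZSet S, ℂ)) := by
    set Dt := D.topologicalClosure with hDt
    have hDtcar : (Dt : Set C(ZSet S, ℂ)) = closure (D : Set C(ZSet S, ℂ)) := rfl
    have hconstmem : ∀ c : ℂ, ContinuousMap.const (ZSet S) c ∈ Dt := by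
      intro c
      show _ ∈ closure (D : Set C(ZSet S, ℂ))
      rw [Metric.mem_closure_iff]
      intro δ hδ
      obtain ⟨q₁, hq₁⟩ := exists_rat_near c.re (by linarith : (0:ℝ) < δ/4)
      obtain ⟨q₂, hq₂⟩ := exists_rat_near c.im (by linarith : (0:ℝ) < δ/4)
      refine ⟨ContinuousMap.const _ ((q₁:ℂ) + (q₂:ℂ)*Complex.I), ?_, ?_⟩
      · show _ ∈ D
        rw [hD, Subring.mem_comap, piHom_const]
        exact Subring.subset_closure (hconst q₁ q₂)
      · have h1 : dist c ((q₁:ℂ) + (q₂:ℂ)*Complex.I) < δ/2 := by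
          rw [dist_eq_norm]
          refine lt_of_le_of_lt (Complex.norm_le_abs_re_add_abs_im _) ?_
          have hre : (c - ((q₁:ℂ) + (q₂:ℂ)*Complex.I)).re = c.re - q₁ := by simp
          have him : (c - ((q₁:ℂ) + (q₂:ℂ)*Complex.I)).im = c.im - q₂ := by simp
          rw [hre, him]
          linarith
        have h2 : dist (ContinuousMap.const (ZSet S) c)
            (ContinuousMap.const (ZSet S) ((q₁:ℂ) + (q₂:ℂ)*Complex.I)) ≤ δ/2 :=
          (ContinuousMap.dist_le (by linarith)).mpr (fun z => by
            simpa using h1.le)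
        linarith
    have hstarD : ∀ u ∈ Dt, star u ∈ Dt := by
      intro u hu
      have himg : star '' (D : Set C(ZSet S, ℂ)) ⊆ (D : Set C(ZSet S, ℂ)) := by
        rintro _ ⟨d, hd, rfl⟩
        show _ ∈ D
        rw [hD, Subring.mem_comap, piHom_star]
        exact hSc_star _ hd
      have : star u ∈ star '' closure (D : Set C(ZSet S, ℂ)) := ⟨u, hu, rfl⟩
      have hsub : star '' closure (D : Set C(ZSet S, ℂ)) ⊆
          closure (star '' (D : Set C(ZSet S, ℂ))) :=
        image_closure_subset_closure_image continuous_star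
      exact closure_mono himg (hsub this)
    set A : StarSubalgebra ℂ C(ZSet S, ℂ) :=
      { toSubsemiring := Dt.toSubsemiring
        algebraMap_mem' := fun c => by
          have : algebraMap ℂ C(ZSet S, ℂ) c = ContinuousMap.const (ZSet S) c := by
            ext z; simp [_root_.algebraMap_apply]
          rw [this]
          exact hconstmem c
        star_mem' := fun {u} hu => hstarD u hu } with hA
    have hAcar : (A : Set C(ZSet S, ℂ)) = closure (D : Set C(ZSet S, ℂ)) := rfl
    have hsepA : A.SeparatesPoints := by
      intro z z' hzz'
      have hval : z.1 ≠ z'.1 := fun hval => hzz' (Subtype.ext hval)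
      obtain ⟨f, hf⟩ := Function.ne_iff.1 hval
      refine ⟨coordZ S f, ⟨coordZ S f, ?_, rfl⟩, hf⟩
      show coordZ S f ∈ (A : Set C(ZSet S, ℂ))
      rw [hAcar]
      apply subset_closure
      show _ ∈ D
      rw [hD, Subring.mem_comap, piHom_coord]
      exact Subring.subset_closure f.2
    have hSW := ContinuousMap.starSubalgebra_topologicalClosure_eq_top_of_separatesPoints A hsepA
    intro u
    have : (A.topologicalClosure : Set C(ZSet S, ℂ)) = Set.univ := by
      rw [hSW]; rfl
    rw [StarSubalgebra.topologicalClosure_coe, hAcar, closure_closure] at this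
    rw [this]
    trivial
  intro h ε hε
  obtain ⟨p, hpD, hpdist⟩ := (Metric.mem_closure_iff (s := (D : Set C(ZSet S, ℂ))) (a := h)).1 (hDbar h) (ε/2) (by linarith)
  have hπp : piHom S p ∈ Subring.closure S := hpD
  obtain ⟨g, hgS, hgnorm⟩ := hwit _ hπp (ε/2) (by linarith)
  refine ⟨coordZ S ⟨g, hgS⟩, ?_⟩
  intro z
  set q : C(ZSet S, ℂ) := coordZ S ⟨g, hgS⟩ with hq
  have hpow : piHom S (p - q^n) = piHom S p - g^n := by
    rw [map_sub, map_pow, hq, piHom_coord]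
  have h2 : ‖p z - (q z)^n‖ < ε/2 := by
    have hle := norm_le_piHom S (p - q^n) z
    rw [hpow] at hle
    have : (p - q^n) z = p z - (q z)^n := by simp
    rw [this] at hle
    exact lt_of_le_of_lt hle hgnorm
  have h1 : ‖h z - p z‖ < ε/2 := by
    rw [← dist_eq_norm]
    exact lt_of_le_of_lt (ContinuousMap.dist_apply_le_dist z) hpdist
  calc ‖h z - (q z)^n‖ ≤ ‖h z - p z‖ + ‖p z - (q z)^n‖ := norm_sub_le_norm_sub_add_norm_sub _ _ _
    _ < ε := by linarith

end Aux


/-- a completely regular (Tychonoff) space `X` of weight `≤ τ` satisfying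
condition `(*)ₙ` in its bounded-function form has a compactification `Z` of weight `≤ τ`
satisfying condition `(*)ₙ`. -/
theorem exists_starN_compactification
    (n : ℕ) (hn : 2 ≤ n) (τ : Cardinal.{u}) (hτ : ℵ₀ ≤ τ)
    (X : Type u) [TopologicalSpace X] [T35Space X]
    (hX : SatisfiesStarNBdd n X) (hwX : HasWeightLE X τ) :
    ∃ (Z : Type u) (tZ : TopologicalSpace Z),
      @CompactSpace Z tZ ∧ @T2Space Z tZ ∧ @SatisfiesStarN n Z tZ ∧ @HasWeightLE Z tZ τ ∧
      ∃ e : X → Z, @Topology.IsEmbedding X Z _ tZ e ∧ @DenseRange Z tZ X e := by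
  obtain ⟨S₀, hS₀card, hS₀sep⟩ := exists_sep_family τ hτ hwX
  obtain ⟨S, hS₀S, hScard, hconst, hstar, hwit⟩ := exists_closed_family hX τ hτ S₀ hS₀card
  haveI : CompactSpace (ZSet S) := compactSpace_ZSet S
  have hsepS : ∀ (x : X) (W : Set X), IsOpen W → x ∈ W →
      ∃ f ∈ S, (∀ y ∉ W, f y = 0) ∧ 1 ≤ ‖f x‖ := by
    intro x W hW hx
    obtain ⟨f, hf, h1, h2⟩ := hS₀sep x W hW hx
    exact ⟨f, hS₀S hf, h1, h2⟩
  exact ⟨↥(ZSet S), inferInstance, inferInstance, inferInstance,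
    satisfiesStarN_ZSet n S hconst hstar hwit,
    hasWeightLE_subtype_pi (↥S) τ hτ hScard (ZSet S),
    eZ S, isEmbedding_eZ S hsepS, denseRange_eZ S⟩
end

section
/- Fix an integer n ≥ 2. Every compact Hausdorff space X satisfying condition (*)_n is homeomorphic to the limit space of an inverse system {X_α, p^β_α : α, β ∈ A} over a directed partially ordered set A in which every X_α is a metrizable compact Hausdorff space satisfying condition (*)_n. -/
universe u

open Set TopologicalSpace

namespace StarNProofAux

/-- A fixed countable dense subset of `ℂ`. -/
noncomputable def Dset : Set ℂ := (TopologicalSpace.exists_countable_dense ℂ).choose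

lemma Dset_countable : Dset.Countable :=
  (TopologicalSpace.exists_countable_dense ℂ).choose_spec.1

lemma Dset_dense : Dense Dset :=
  (TopologicalSpace.exists_countable_dense ℂ).choose_spec.2

variable {X : Type u} [TopologicalSpace X]

/-- A countable family of functions closed under the needed operations. -/
structure Good (n : ℕ) (F : Set C(X, ℂ)) : Prop where
  countable : F.Countable
  add_mem' : ∀ {f g : C(X, ℂ)}, f ∈ F → g ∈ F → f + g ∈ F
  mul_mem' : ∀ {f g : C(X, ℂ)}, f ∈ F → g ∈ F → f * g ∈ F
  star_mem' : ∀ {f : C(X, ℂ)}, f ∈ F → star f ∈ F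
  const_mem' : ∀ z ∈ Dset, (ContinuousMap.const X z : C(X, ℂ)) ∈ F
  root : ∀ f ∈ F, ∀ ε : ℝ, 0 < ε → ∃ g ∈ F, ∀ x : X, ‖f x - g x ^ n‖ < ε

section closure

variable (n : ℕ) (hX : SatisfiesStarN n X)

/-- A chosen approximate `n`-th root. -/
noncomputable def rt (f : C(X, ℂ)) (k : ℕ) : C(X, ℂ) :=
  (hX f (1 / (k + 1)) (by positivity)).choose

lemma rt_spec (f : C(X, ℂ)) (k : ℕ) :
    ∀ x : X, ‖f x - rt n hX f k x ^ n‖ < 1 / (k + 1) :=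
  (hX f (1 / (k + 1)) (by positivity)).choose_spec

/-- One saturation step. -/
noncomputable def step (T : Set C(X, ℂ)) : Set C(X, ℂ) :=
  T ∪ Set.image2 (· + ·) T T ∪ Set.image2 (· * ·) T T ∪ (star '' T)
    ∪ ((fun z => (ContinuousMap.const X z : C(X, ℂ))) '' Dset)
    ∪ ⋃ k : ℕ, (fun f => rt n hX f k) '' T

lemma subset_step (T : Set C(X, ℂ)) : T ⊆ step n hX T := fun f hf =>
  Or.inl (Or.inl (Or.inl (Or.inl (Or.inl hf))))

lemma step_countable {T : Set C(X, ℂ)} (hT : T.Countable) : (step n hX T).Countable := by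
  have h1 : (Set.image2 (fun f g : C(X, ℂ) => f + g) T T).Countable := hT.image2 hT _
  have h2 : (Set.image2 (fun f g : C(X, ℂ) => f * g) T T).Countable := hT.image2 hT _
  have h3 : ((star : C(X, ℂ) → C(X, ℂ)) '' T).Countable := hT.image _
  have h4 : ((fun z => (ContinuousMap.const X z : C(X, ℂ))) '' Dset).Countable :=
    Dset_countable.image _
  have h5 : (⋃ k : ℕ, (fun f => rt n hX f k) '' T).Countable :=
    countable_iUnion fun k => hT.image _
  unfold step
  exact ((((hT.union h1).union h2).union h3).union h4).union h5

/-- The saturation of a set. -/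
noncomputable def clos (S : Set C(X, ℂ)) : Set C(X, ℂ) := ⋃ m : ℕ, (step n hX)^[m] S

lemma subset_clos (S : Set C(X, ℂ)) : S ⊆ clos n hX S := by
  intro f hf
  exact mem_iUnion.mpr ⟨0, hf⟩

lemma iter_mono (S : Set C(X, ℂ)) : Monotone fun m => (step n hX)^[m] S := by
  apply monotone_nat_of_le_succ
  intro m
  rw [Function.iterate_succ_apply']
  exact subset_step n hX _

lemma clos_good {S : Set C(X, ℂ)} (hS : S.Countable) : Good n (clos n hX S) := by
  have hiter : ∀ m : ℕ, ((step n hX)^[m] S).Countable := by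
    intro m
    induction m with
    | zero => exact hS
    | succ m ih => rw [Function.iterate_succ_apply']; exact step_countable n hX ih
  have hmem : ∀ m : ℕ, (step n hX)^[m] S ⊆ clos n hX S := fun m f hf => mem_iUnion.mpr ⟨m, hf⟩
  have hstep : ∀ m : ℕ, step n hX ((step n hX)^[m] S) ⊆ clos n hX S := by
    intro m f hf
    refine hmem (m + 1) ?_
    rwa [Function.iterate_succ_apply']
  refine ⟨countable_iUnion hiter, ?_, ?_, ?_, ?_, ?_⟩
  · intro f g hf hg
    obtain ⟨m1, hm1⟩ := mem_iUnion.mp hf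
    obtain ⟨m2, hm2⟩ := mem_iUnion.mp hg
    have h1 := iter_mono n hX S (le_max_left m1 m2) hm1
    have h2 := iter_mono n hX S (le_max_right m1 m2) hm2
    exact hstep _ (Or.inl (Or.inl (Or.inl (Or.inl (Or.inr ⟨f, h1, g, h2, rfl⟩)))))
  · intro f g hf hg
    obtain ⟨m1, hm1⟩ := mem_iUnion.mp hf
    obtain ⟨m2, hm2⟩ := mem_iUnion.mp hg
    have h1 := iter_mono n hX S (le_max_left m1 m2) hm1
    have h2 := iter_mono n hX S (le_max_right m1 m2) hm2
    exact hstep _ (Or.inl (Or.inl (Or.inl (Or.inr ⟨f, h1, g, h2, rfl⟩))))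
  · intro f hf
    obtain ⟨m, hm⟩ := mem_iUnion.mp hf
    exact hstep m (Or.inl (Or.inl (Or.inr ⟨f, hm, rfl⟩)))
  · intro z hz
    exact hstep 0 (Or.inl (Or.inr ⟨z, hz, rfl⟩))
  · intro f hf ε hε
    obtain ⟨m, hm⟩ := mem_iUnion.mp hf
    obtain ⟨k, hk⟩ := exists_nat_one_div_lt hε
    refine ⟨rt n hX f k, hstep m (Or.inr (mem_iUnion.mpr ⟨k, ⟨f, hm, rfl⟩⟩)), fun x => ?_⟩
    exact lt_trans (rt_spec n hX f k x) hk

include hX in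
lemma exists_good {S : Set C(X, ℂ)} (hS : S.Countable) :
    ∃ F : Set C(X, ℂ), Good n F ∧ S ⊆ F :=
  ⟨clos n hX S, clos_good n hX hS, subset_clos n hX S⟩

end closure

section approx

variable [CompactSpace X]

lemma algebraMap_CM_apply {Y : Type*} [TopologicalSpace Y] (c : ℂ) (y : Y) :
    (algebraMap ℂ C(Y, ℂ) c) y = c := by
  rw [Algebra.algebraMap_eq_smul_one]; simp

lemma norm_apply_sub_le (f g : C(X, ℂ)) (x : X) : ‖f x - g x‖ ≤ ‖f - g‖ := by
  calc ‖f x - g x‖ = ‖(f - g) x‖ := by simp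
    _ ≤ ‖f - g‖ := ContinuousMap.norm_coe_le_norm _ x

/-- Elements of the complex star subalgebra generated by a good family can be
uniformly approximated by elements of the family itself. -/
lemma good_approx {n : ℕ} {F : Set C(X, ℂ)} (hF : Good n F) :
    ∀ a ∈ StarAlgebra.adjoin ℂ F, ∀ ε : ℝ, 0 < ε → ∃ f ∈ F, ‖a - f‖ < ε := by
  intro a ha
  induction ha using StarAlgebra.adjoin_induction with
  | mem x hx =>
    intro ε hε
    exact ⟨x, hx, by simpa using hε⟩
  | algebraMap c =>
    intro ε hε
    obtain ⟨z, hzD, hz⟩ : ∃ z ∈ Dset, dist c z < ε := by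
      have := Metric.dense_iff.mp Dset_dense c ε hε
      obtain ⟨z, hz1, hz2⟩ := this
      exact ⟨z, hz2, by rwa [Metric.mem_ball, dist_comm] at hz1⟩
    refine ⟨ContinuousMap.const X z, hF.const_mem' z hzD, ?_⟩
    have : ∀ x : X, ‖(algebraMap ℂ C(X, ℂ) c - ContinuousMap.const X z) x‖ < ε := by
      intro x
      rw [ContinuousMap.sub_apply, algebraMap_CM_apply, ContinuousMap.const_apply]
      simpa [Complex.dist_eq] using hz
    exact (ContinuousMap.norm_lt_iff _ hε).mpr this
  | add x y hx hy ihx ihy =>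
    intro ε hε
    obtain ⟨f, hf, hf'⟩ := ihx (ε / 2) (by positivity)
    obtain ⟨g, hg, hg'⟩ := ihy (ε / 2) (by positivity)
    refine ⟨f + g, hF.add_mem' hf hg, ?_⟩
    have : x + y - (f + g) = (x - f) + (y - g) := by ring
    calc ‖x + y - (f + g)‖ = ‖(x - f) + (y - g)‖ := by rw [this]
      _ ≤ ‖x - f‖ + ‖y - g‖ := norm_add_le _ _
      _ < ε / 2 + ε / 2 := by gcongr
      _ = ε := by ring
  | mul x y hx hy ihx ihy =>
    intro ε hε
    have hb1 : (0:ℝ) < ‖y‖ + 1 := by positivity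
    have ha2 : (0:ℝ) < ‖x‖ + 2 := by positivity
    obtain ⟨f, hf, hf'⟩ := ihx (min 1 (ε / 2 / (‖y‖ + 1))) (by positivity)
    obtain ⟨g, hg, hg'⟩ := ihy (ε / 2 / (‖x‖ + 2)) (by positivity)
    refine ⟨f * g, hF.mul_mem' hf hg, ?_⟩
    have hfx2 : ‖x - f‖ < ε / 2 / (‖y‖ + 1) := lt_of_lt_of_le hf' (min_le_right _ _)
    have hfnorm : ‖f‖ ≤ ‖x‖ + 1 := by
      have h1 : ‖f‖ - ‖x‖ ≤ ‖f - x‖ := norm_sub_norm_le f x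
      have h2 : ‖f - x‖ = ‖x - f‖ := norm_sub_rev f x
      have h3 : ‖x - f‖ < 1 := lt_of_lt_of_le hf' (min_le_left _ _)
      linarith
    have hfx2' : ‖x - f‖ * (‖y‖ + 1) < ε / 2 := (lt_div_iff₀ hb1).mp hfx2
    have hg'' : ‖y - g‖ * (‖x‖ + 2) < ε / 2 := (lt_div_iff₀ ha2).mp hg'
    have t1 : ‖x - f‖ * ‖y‖ < ε / 2 := by nlinarith [norm_nonneg (x - f)]
    have t2 : ‖f‖ * ‖y - g‖ < ε / 2 := by
      nlinarith [mul_le_mul_of_nonneg_right hfnorm (norm_nonneg (y - g)),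
        norm_nonneg (y - g)]
    have key : x * y - f * g = (x - f) * y + f * (y - g) := by ring
    calc ‖x * y - f * g‖ = ‖(x - f) * y + f * (y - g)‖ := by rw [key]
      _ ≤ ‖(x - f) * y‖ + ‖f * (y - g)‖ := norm_add_le _ _
      _ ≤ ‖x - f‖ * ‖y‖ + ‖f‖ * ‖y - g‖ := add_le_add (norm_mul_le _ _) (norm_mul_le _ _)
      _ < ε / 2 + ε / 2 := add_lt_add t1 t2
      _ = ε := by ring
  | star x hx ihx =>
    intro ε hε
    obtain ⟨f, hf, hf'⟩ := ihx ε hε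
    refine ⟨star f, hF.star_mem' hf, ?_⟩
    calc ‖star x - star f‖ = ‖star (x - f)‖ := by rw [star_sub]
      _ = ‖x - f‖ := norm_star _
      _ < ε := hf'

end approx

section spaces

variable [CompactSpace X] [T2Space X]

/-- The evaluation map into the product. -/
noncomputable def toFn (F : Set C(X, ℂ)) : C(X, ↥F → ℂ) :=
  ⟨fun x f => f.1 x, continuous_pi fun f => f.1.continuous⟩

/-- The image of `X` in the product, a metrizable compact Hausdorff space. -/
abbrev Sp (F : Set C(X, ℂ)) : Type u := ↥(Set.range (toFn F))

/-- The quotient map onto the image. -/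
noncomputable def qm (F : Set C(X, ℂ)) : C(X, Sp F) :=
  ⟨fun x => ⟨toFn F x, Set.mem_range_self x⟩, (toFn F).continuous.subtype_mk _⟩

lemma qm_surjective (F : Set C(X, ℂ)) : Function.Surjective (qm F) := by
  rintro ⟨y, x, rfl⟩
  exact ⟨x, rfl⟩

/-- Coordinate functions on the image space. -/
def coordFn {F : Set C(X, ℂ)} (f : ↥F) : C(Sp F, ℂ) :=
  ⟨fun y => y.1 f, (continuous_apply f).comp continuous_subtype_val⟩

lemma sp_compact (F : Set C(X, ℂ)) : CompactSpace (Sp F) :=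
  isCompact_iff_compactSpace.mp (isCompact_range (toFn F).continuous)

lemma sp_metrizable {F : Set C(X, ℂ)} (hF : F.Countable) :
    TopologicalSpace.MetrizableSpace (Sp F) := by
  haveI := hF.to_subtype
  infer_instance

/-- The restriction (bonding) map between image spaces. -/
lemma res_mem {F G : Set C(X, ℂ)} (h : F ⊆ G) (y : Sp G) :
    (fun f : ↥F => y.1 ⟨f.1, h f.2⟩) ∈ Set.range (toFn F) := by
  obtain ⟨x, hx⟩ := y.2
  refine Set.mem_range.mpr ⟨x, ?_⟩
  funext f
  calc toFn F x f = toFn G x ⟨f.1, h f.2⟩ := rfl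
    _ = y.1 ⟨f.1, h f.2⟩ := by rw [hx]

def res {F G : Set C(X, ℂ)} (h : F ⊆ G) : C(Sp G, Sp F) where
  toFun y := ⟨fun f => y.1 ⟨f.1, h f.2⟩, res_mem h y⟩
  continuous_toFun := by
    apply Continuous.subtype_mk
    apply continuous_pi
    intro f
    exact (continuous_apply (⟨f.1, h f.2⟩ : ↥G)).comp continuous_subtype_val

lemma res_qm {F G : Set C(X, ℂ)} (h : F ⊆ G) (x : X) : res h (qm G x) = qm F x :=
  Subtype.ext rfl

/-- Condition `(*)ₙ` holds on the image space of a good family. -/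
lemma sp_starN {n : ℕ} {F : Set C(X, ℂ)} (hF : Good n F) : SatisfiesStarN n (Sp F) := by
  haveI := sp_compact F
  intro h ε hε
  -- the coordinates separate points, so Stone–Weierstrass applies
  set A := StarAlgebra.adjoin ℂ (Set.range (coordFn (F := F))) with hA
  have hsep : A.SeparatesPoints := by
    intro y z hyz
    have : ∃ f : ↥F, y.1 f ≠ z.1 f := by
      by_contra hcon
      push_neg at hcon
      exact hyz (Subtype.ext (funext hcon))
    obtain ⟨f, hf⟩ := this
    exact ⟨coordFn f, ⟨coordFn f, StarAlgebra.subset_adjoin ℂ _ ⟨f, rfl⟩, rfl⟩, hf⟩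
  have hSW := ContinuousMap.starSubalgebra_topologicalClosure_eq_top_of_separatesPoints A hsep
  have hmem : h ∈ closure (A : Set C(Sp F, ℂ)) := by
    have : h ∈ A.topologicalClosure := by rw [hSW]; trivial
    exact this
  obtain ⟨P, hPA, hPd⟩ := Metric.mem_closure_iff.mp hmem (ε / 3) (by positivity)
  -- composing with the quotient map lands in the adjoin of `F`
  have hcomp : ∀ a ∈ A, a.comp (qm F) ∈ StarAlgebra.adjoin ℂ F := by
    intro a ha
    induction ha using StarAlgebra.adjoin_induction with
    | mem x hx =>
      obtain ⟨f, rfl⟩ := hx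
      have : (coordFn f).comp (qm F) = f.1 := by ext x; rfl
      rw [this]
      exact StarAlgebra.subset_adjoin ℂ _ f.2
    | algebraMap c =>
      have : (algebraMap ℂ C(Sp F, ℂ) c).comp (qm F) = algebraMap ℂ C(X, ℂ) c := by
        ext x
        rw [ContinuousMap.comp_apply, algebraMap_CM_apply, algebraMap_CM_apply]
      rw [this]
      exact algebraMap_mem _ c
    | add x y hx hy ihx ihy =>
      have : (x + y).comp (qm F) = x.comp (qm F) + y.comp (qm F) := by ext t; simp
      rw [this]; exact add_mem ihx ihy
    | mul x y hx hy ihx ihy =>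
      have : (x * y).comp (qm F) = x.comp (qm F) * y.comp (qm F) := by ext t; simp
      rw [this]; exact mul_mem ihx ihy
    | star x hx ihx =>
      have : (star x).comp (qm F) = star (x.comp (qm F)) := by ext t; simp
      rw [this]; exact star_mem ihx
  obtain ⟨f, hfF, hf⟩ := good_approx hF (P.comp (qm F)) (hcomp P hPA) (ε / 3) (by positivity)
  obtain ⟨g, hgF, hg⟩ := hF.root f hfF (ε / 3) (by positivity)
  refine ⟨coordFn ⟨g, hgF⟩, fun y => ?_⟩
  obtain ⟨x, rfl⟩ := qm_surjective F y
  have e1 : ‖h (qm F x) - P (qm F x)‖ < ε / 3 := by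
    have h1 := norm_apply_sub_le h P (qm F x)
    have h2 : ‖h - P‖ < ε / 3 := by rw [← dist_eq_norm]; exact hPd
    linarith
  have e2 : ‖P (qm F x) - f x‖ < ε / 3 := by
    have h1 := norm_apply_sub_le (P.comp (qm F)) f x
    have h2 : ‖P (qm F x) - f x‖ = ‖(P.comp (qm F)) x - f x‖ := rfl
    rw [h2]
    linarith
  have e3 : ‖f x - g x ^ n‖ < ε / 3 := hg x
  have key : h (qm F x) - coordFn (⟨g, hgF⟩ : ↥F) (qm F x) ^ n
      = (h (qm F x) - P (qm F x)) + (P (qm F x) - f x) + (f x - g x ^ n) := by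
    have : coordFn (⟨g, hgF⟩ : ↥F) (qm F x) = g x := rfl
    rw [this]; ring
  calc ‖h (qm F x) - coordFn (⟨g, hgF⟩ : ↥F) (qm F x) ^ n‖
      = ‖(h (qm F x) - P (qm F x)) + (P (qm F x) - f x) + (f x - g x ^ n)‖ := by rw [key]
    _ ≤ ‖h (qm F x) - P (qm F x)‖ + ‖P (qm F x) - f x‖ + ‖f x - g x ^ n‖ :=
        norm_add₃_le
    _ < ε / 3 + ε / 3 + ε / 3 := by gcongr
    _ = ε := by ring

end spaces

end StarNProofAux

/-- every compact Hausdorff space satisfying condition `(*)ₙ` is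
homeomorphic to the limit space of an inverse system of metrizable compact Hausdorff
spaces, each satisfying condition `(*)ₙ`. -/
theorem exists_inverseSystem_of_metrizable_starN
    (n : ℕ) (hn : 2 ≤ n) (X : Type u) [TopologicalSpace X] [CompactSpace X] [T2Space X]
    (hX : SatisfiesStarN n X) :
    ∃ S : InvSystemCH.{u},
      (∀ a : S.A, TopologicalSpace.MetrizableSpace (S.X a)) ∧
      (∀ a : S.A, SatisfiesStarN n (S.X a)) ∧
      Nonempty (X ≃ₜ S.Limit) := by
  classical
  open StarNProofAux in
  let S : InvSystemCH.{u} :=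
    { A := {F : Set C(X, ℂ) // Good n F}
      idx_nonempty := ⟨⟨clos n hX ∅, clos_good n hX Set.countable_empty⟩⟩
      directed := by
        intro a b
        obtain ⟨H, hH, hsub⟩ := exists_good n hX (a.2.countable.union b.2.countable)
        exact ⟨⟨H, hH⟩, fun f hf => hsub (Set.mem_union_left _ hf),
          fun f hf => hsub (Set.mem_union_right _ hf)⟩
      X := fun a => Sp a.1
      compactX := fun a => sp_compact a.1
      t2X := fun a => inferInstance
      p := fun {a b} h => res h
      p_id := fun a x => Subtype.ext (funext fun f => rfl)
      p_comp := fun {a b c} h₁ h₂ x => Subtype.ext (funext fun f => rfl) }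
  refine ⟨S, fun a => sp_metrizable a.2.countable, fun a => sp_starN a.2, ?_⟩
  haveI : ∀ a : S.A, T2Space (S.X a) := S.t2X
  let φ : X → S.Limit := fun x => ⟨fun a => qm a.1 x, fun a b h => res_qm h x⟩
  have hcont : Continuous φ :=
    Continuous.subtype_mk (continuous_pi fun a => (qm a.1).continuous) _
  have hinj : Function.Injective φ := by
    intro x y hxy
    by_contra hne
    obtain ⟨f, hf0, hf1⟩ : ∃ f : C(X, ℝ), f x = 0 ∧ f y = 1 := by
      obtain ⟨f, hf0, hf1, -⟩ := exists_continuous_zero_one_of_isClosed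
        (isClosed_singleton (x := x)) (isClosed_singleton (x := y))
        (by simpa [Set.disjoint_singleton] using hne)
      exact ⟨f, hf0 rfl, hf1 rfl⟩
    let fc : C(X, ℂ) := ⟨fun t => (f t : ℂ), Complex.continuous_ofReal.comp f.continuous⟩
    let a0 : S.A := ⟨clos n hX {fc}, clos_good n hX (Set.countable_singleton fc)⟩
    have hfc : fc ∈ a0.1 := subset_clos n hX _ (Set.mem_singleton fc)
    have hq : qm a0.1 x = qm a0.1 y := congrArg (fun t : S.Limit => t.1 a0) hxy
    have happ : fc x = fc y := congrFun (congrArg Subtype.val hq) ⟨fc, hfc⟩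
    have : (f x : ℂ) = (f y : ℂ) := happ
    rw [hf0, hf1] at this
    simpa using this
  have hsurj : Function.Surjective φ := by
    intro y
    haveI := S.idx_nonempty
    let K : S.A → Set X := fun a => {x | qm a.1 x = y.1 a}
    have hcl : ∀ a, IsClosed (K a) := fun a =>
      isClosed_eq (qm a.1).continuous continuous_const
    have hne : ∀ a, (K a).Nonempty := by
      intro a
      obtain ⟨x, hx⟩ := (y.1 a).2
      exact ⟨x, Subtype.ext hx⟩
    have hdir : Directed (· ⊇ ·) K := by
      intro a b
      obtain ⟨c, hac, hbc⟩ := S.directed a b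
      have key : ∀ (d : S.A) (hdc : d ≤ c), K c ⊆ K d := by
        intro d hdc x hx
        have hx' : qm c.1 x = y.1 c := hx
        have h1 : res hdc (qm c.1 x) = qm d.1 x := res_qm hdc x
        have h2 : res hdc (y.1 c) = y.1 d := y.2 d c hdc
        show qm d.1 x = y.1 d
        rw [← h1, hx', h2]
      exact ⟨c, key a hac, key b hbc⟩
    obtain ⟨x, hx⟩ := IsCompact.nonempty_iInter_of_directed_nonempty_isCompact_isClosed
      K hdir hne (fun a => (hcl a).isCompact) hcl
    exact ⟨x, Subtype.ext (funext fun a => Set.mem_iInter.mp hx a)⟩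
  exact ⟨Continuous.homeoOfEquivCompactToT2 (f := Equiv.ofBijective φ ⟨hinj, hsurj⟩) hcont⟩
end

section
/- Fix an integer n ≥ 2 and an infinite cardinal τ. There exist a compact Hausdorff space X_τ of weight ≤ τ satisfying condition (*)_n and a continuous map f : X_τ → [0,1]^τ which is invertible for the class A(n): for every completely regular space Z satisfying condition (*)_n (in its bounded-function form) and every continuous map g : Z → [0,1]^τ, there exists a continuous map ḡ : Z → X_τ with f ∘ ḡ = g. -/
universe u

open Cardinal BoundedContinuousFunction

noncomputable section
namespace Star6
open MvPolynomial TopologicalSpace Set BoundedContinuousFunction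

/-- rational polynomials in variables `σ × Bool` (re/im parts of coordinates). -/
abbrev PP (σ : Type u) : Type u := MvPolynomial (σ × Bool) ℚ

/-- adjunction index: two polynomials (re and im part of the target function) and
a precision index. -/
abbrev AA (σ : Type u) : Type u := PP σ × PP σ × ℕ

/-- the real/imaginary parts of the coordinates of a point. -/
def parts {σ : Type u} (y : σ → ℂ) : σ × Bool → ℝ :=
  fun v => if v.2 then (y v.1).im else (y v.1).re

/-- evaluation of a rational polynomial at (the re/im parts of) a complex vector. -/
def evalR {σ : Type u} (p : PP σ) (y : σ → ℂ) : ℝ :=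
  MvPolynomial.aeval (parts y) p

/-- the complex function coded by an adjunction index. -/
def evalC {σ : Type u} (a : AA σ) (y : σ → ℂ) : ℂ :=
  (evalR a.1 y : ℝ) + Complex.I * (evalR a.2.1 y :ℝ)

lemma continuous_parts {σ : Type u} (v : σ × Bool) :
    Continuous fun y : σ → ℂ => parts y v := by
  unfold parts
  by_cases h : v.2 <;> simp only [h, if_true, if_false] <;>
    [exact Complex.continuous_im.comp (continuous_apply v.1);
     exact Complex.continuous_re.comp (continuous_apply v.1)]

lemma continuous_evalR {σ : Type u} (p : PP σ) : Continuous fun y : σ → ℂ => evalR p y := by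
  induction p using MvPolynomial.induction_on with
  | C q => simpa [evalR] using continuous_const
  | add p q hp hq => simp only [evalR, map_add]; exact hp.add hq
  | mul_X p v hp => simp only [evalR, map_mul, aeval_X]; exact hp.mul (continuous_parts v)

lemma continuous_evalC {σ : Type u} (a : AA σ) : Continuous fun y : σ → ℂ => evalC a y := by
  unfold evalC
  exact (Complex.continuous_ofReal.comp (continuous_evalR a.1)).add
    (continuous_const.mul (Complex.continuous_ofReal.comp (continuous_evalR a.2.1)))

/-- a bound for `evalR p` valid on the polydisc of radii `r`. -/
def polyBound {σ : Type u} (r : σ → ℝ) (p : PP σ) : ℝ :=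
  ∑ d ∈ p.support, |((MvPolynomial.coeff d p : ℚ) : ℝ)| * ∏ i ∈ d.support, (r i.1) ^ (d i)

lemma polyBound_nonneg {σ : Type u} {r : σ → ℝ} (hr : ∀ j, 0 ≤ r j) (p : PP σ) :
    0 ≤ polyBound r p := by
  refine Finset.sum_nonneg fun d _ => mul_nonneg (abs_nonneg _) (Finset.prod_nonneg ?_)
  exact fun i _ => pow_nonneg (hr i.1) _

lemma abs_evalR_le {σ : Type u} {r : σ → ℝ} {p : PP σ} {y : σ → ℂ}
    (hy : ∀ j, ‖y j‖ ≤ r j) : |evalR p y| ≤ polyBound r p := by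
  have hparts : ∀ v : σ × Bool, |parts y v| ≤ r v.1 := by
    intro v
    unfold parts
    by_cases h : v.2 <;> simp only [h, if_true, if_false]
    · exact le_trans (by simpa using Complex.abs_im_le_norm (y v.1)) (hy v.1)
    · exact le_trans (by simpa using Complex.abs_re_le_norm (y v.1)) (hy v.1)
  rw [evalR, aeval_def, eval₂_eq]
  refine le_trans (Finset.abs_sum_le_sum_abs _ _) (Finset.sum_le_sum fun d _ => ?_)
  rw [abs_mul, Finset.abs_prod]
  have h1 : |algebraMap ℚ ℝ (coeff d p)| = |((coeff d p : ℚ) : ℝ)| := rfl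
  rw [h1]
  refine mul_le_mul_of_nonneg_left (Finset.prod_le_prod (fun i _ => abs_nonneg _) ?_) (abs_nonneg _)
  intro i _
  rw [abs_pow]
  exact pow_le_pow_left₀ (abs_nonneg _) (hparts i) _

lemma norm_evalC_le {σ : Type u} {r : σ → ℝ} {a : AA σ} {y : σ → ℂ}
    (hy : ∀ j, ‖y j‖ ≤ r j) : ‖evalC a y‖ ≤ polyBound r a.1 + polyBound r a.2.1 := by
  refine le_trans (norm_add_le _ _) (add_le_add ?_ ?_)
  · simpa using abs_evalR_le (p := a.1) hy
  · rw [norm_mul]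
    simpa using abs_evalR_le (p := a.2.1) hy

-- NEW PART

/-- the coordinate index sets of the stages -/
def J (ι : Type u) : ℕ → Type u
  | 0 => ι
  | k+1 => J ι k ⊕ AA (J ι k)

/-- the radius bounds of the coordinates -/
def rr (ι : Type u) : ∀ k, J ι k → ℝ
  | 0 => fun _ => 1
  | k+1 => Sum.elim (rr ι k)
      (fun a => polyBound (rr ι k) a.1 + polyBound (rr ι k) a.2.1 + 1)

lemma rr_nonneg (ι : Type u) : ∀ k (j : J ι k), 0 ≤ rr ι k j := by
  intro k
  induction k with
  | zero => intro j; norm_num [rr]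
  | succ k ih =>
      intro j
      cases j with
      | inl j => simpa [rr] using ih j
      | inr a =>
          have h1 := polyBound_nonneg ih a.1
          have h2 := polyBound_nonneg ih a.2.1
          simp only [rr, Sum.elim_inr]
          linarith

lemma rr_inr_one_le (ι : Type u) (k : ℕ) (a : AA (J ι k)) :
    1 ≤ rr ι (k+1) (Sum.inr a) := by
  have h1 := polyBound_nonneg (rr_nonneg ι k) a.1
  have h2 := polyBound_nonneg (rr_nonneg ι k) a.2.1
  simp only [rr, Sum.elim_inr]
  linarith

/-- the stage spaces -/
def XS (n : ℕ) (ι : Type u) : ∀ k, Set (J ι k → ℂ)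
  | 0 => {y | ∀ i : ι, (y i).im = 0 ∧ (y i).re ∈ Set.Icc (0:ℝ) 1}
  | k+1 => {y | (y ∘ Sum.inl) ∈ XS n ι k ∧ ∀ a : AA (J ι k),
      ‖evalC a (y ∘ Sum.inl) - (y (Sum.inr a)) ^ n‖ ≤ 1/(a.2.2+1) ∧
      ‖y (Sum.inr a)‖ ≤ rr ι (k+1) (Sum.inr a)}

lemma XS_bound (n : ℕ) (ι : Type u) : ∀ k (y : J ι k → ℂ), y ∈ XS n ι k →
    ∀ j, ‖y j‖ ≤ rr ι k j := by
  intro k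
  induction k with
  | zero =>
      intro y hy j
      obtain ⟨him, h0, h1⟩ := hy j
      calc ‖y j‖ ≤ |(y j).re| + |(y j).im| := by
            simpa using Complex.norm_le_abs_re_add_abs_im (y j)
        _ ≤ 1 := by rw [him, abs_of_nonneg h0]; simpa [rr] using h1
  | succ k ih =>
      intro y hy j
      cases j with
      | inl j => exact ih _ hy.1 j
      | inr a => exact (hy.2 a).2

lemma XS_closed (n : ℕ) (ι : Type u) : ∀ k, IsClosed (XS n ι k) := by
  intro k
  induction k with
  | zero =>
      have : XS n ι 0 = ⋂ i : ι,
          ((fun y : ι → ℂ => (y i).im) ⁻¹' {0} ∩ (fun y : ι → ℂ => (y i).re) ⁻¹' Set.Icc 0 1) := by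
        ext (y : ι → ℂ); show (∀ i : ι, (y i).im = 0 ∧ (y i).re ∈ Set.Icc (0:ℝ) 1) ↔ y ∈ (⋂ i : ι, ((fun y : ι → ℂ => (y i).im) ⁻¹' {0} ∩ (fun y : ι → ℂ => (y i).re) ⁻¹' Set.Icc 0 1) : Set (ι → ℂ)); simp [Set.mem_iInter, forall_and]
      rw [this]
      refine isClosed_iInter fun i => IsClosed.inter ?_ ?_
      · exact isClosed_singleton.preimage (Complex.continuous_im.comp (continuous_apply i))
      · exact isClosed_Icc.preimage (Complex.continuous_re.comp (continuous_apply i))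
  | succ k ih =>
      have hres : Continuous fun y : J ι (k+1) → ℂ => y ∘ Sum.inl :=
        continuous_pi fun j => continuous_apply _
      have : XS n ι (k+1) = ((fun y : J ι (k+1) → ℂ => y ∘ Sum.inl) ⁻¹' XS n ι k) ∩
          ⋂ a : AA (J ι k),
            ({y : J ι (k+1) → ℂ | ‖evalC a (y ∘ Sum.inl) - (y (Sum.inr a)) ^ n‖ ≤ 1/(a.2.2+1)} ∩
             {y : J ι (k+1) → ℂ | ‖y (Sum.inr a)‖ ≤ rr ι (k+1) (Sum.inr a)}) := by
        ext y; simp [XS, Set.mem_iInter, forall_and]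
      rw [this]
      refine (ih.preimage hres).inter (isClosed_iInter fun a => IsClosed.inter ?_ ?_)
      · refine isClosed_le ?_ continuous_const
        exact (((continuous_evalC a).comp hres).sub ((continuous_apply _).pow n)).norm
      · exact isClosed_le (continuous_apply _).norm continuous_const

/-- index type of all coordinates -/
def V (ι : Type u) : Type u := Σ k, J ι k

/-- the limit space, as a subset of a product -/
def XL (n : ℕ) (ι : Type u) : Set (V ι → ℂ) :=
  {x | ∀ k, (fun j => x ⟨k, j⟩) ∈ XS n ι k ∧ ∀ j : J ι k, x ⟨k+1, Sum.inl j⟩ = x ⟨k, j⟩}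

lemma XL_closed (n : ℕ) (ι : Type u) : IsClosed (XL n ι) := by
  have : XL n ι = ⋂ k : ℕ,
      ((fun x : V ι → ℂ => fun j => x ⟨k, j⟩) ⁻¹' XS n ι k ∩
       ⋂ j : J ι k, {x : V ι → ℂ | x ⟨k+1, Sum.inl j⟩ = x ⟨k, j⟩}) := by
    ext x; simp [XL, Set.mem_iInter, forall_and]
  rw [this]
  refine isClosed_iInter fun k => IsClosed.inter ?_ (isClosed_iInter fun j => ?_)
  · exact (XS_closed n ι k).preimage (continuous_pi fun j => continuous_apply _)
  · exact isClosed_eq (continuous_apply _) (continuous_apply _)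

lemma XL_subset (n : ℕ) (ι : Type u) :
    XL n ι ⊆ Set.univ.pi fun v : V ι => Metric.closedBall (0:ℂ) (rr ι v.1 v.2) := by
  intro x hx v _
  rw [Metric.mem_closedBall, dist_zero_right]; exact XS_bound n ι v.1 _ (hx v.1).1 v.2

lemma XL_isCompact (n : ℕ) (ι : Type u) : IsCompact (XL n ι) := by
  refine IsCompact.of_isClosed_subset (isCompact_univ_pi fun v => ?_) (XL_closed n ι)
    (XL_subset n ι)
  exact isCompact_closedBall _ _

instance XLcompact (n : ℕ) (ι : Type u) : CompactSpace (XL n ι) :=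
  isCompact_iff_compactSpace.mp (XL_isCompact n ι)

/-- embedding of earlier stage coordinates into later stages -/
def emb (ι : Type u) {k K : ℕ} (h : k ≤ K) (j : J ι k) : J ι K :=
  Nat.leRecOn h (fun {m} (x : J ι m) => (Sum.inl x : J ι (m+1))) j

lemma emb_self (ι : Type u) {k : ℕ} (j : J ι k) : emb ι (le_refl k) j = j :=
  Nat.leRecOn_self j

lemma emb_succ (ι : Type u) {k K : ℕ} (h : k ≤ K) (j : J ι k) :
    emb ι (h.trans (Nat.le_succ K)) j = Sum.inl (emb ι h j) :=
  Nat.leRecOn_succ h j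

lemma xcompat {n : ℕ} {ι : Type u} {x : V ι → ℂ} (hx : x ∈ XL n ι)
    {k K : ℕ} (h : k ≤ K) (j : J ι k) : x ⟨K, emb ι h j⟩ = x ⟨k, j⟩ := by
  induction K, h using Nat.le_induction with
  | base => rw [emb_self]
  | succ K hK ih =>
      have : emb ι (hK.trans (Nat.le_succ K)) j = Sum.inl (emb ι hK j) := emb_succ ι hK j
      rw [show (Nat.le_succ_of_le hK : k ≤ K + 1) = hK.trans (Nat.le_succ K) from rfl, this,
        (hx K).2 (emb ι hK j), ih]

-- NEW PART
variable {n : ℕ} {ι : Type u}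

/-- projection onto stage `K` coordinates -/
def proj (n : ℕ) (ι : Type u) (K : ℕ) (x : XL n ι) : J ι K → ℂ := fun j => x.1 ⟨K, j⟩

lemma continuous_proj (K : ℕ) : Continuous (proj n ι K) :=
  continuous_pi fun j => (continuous_apply (⟨K, j⟩ : V ι)).comp continuous_subtype_val

/-- the re/im coordinate functions on the limit space -/
def coords (n : ℕ) (ι : Type u) (v : V ι × Bool) : C(XL n ι, ℝ) :=
  ⟨fun x => if v.2 then (x.1 v.1).im else (x.1 v.1).re, by
    by_cases h : v.2 <;> simp only [h, if_true, if_false]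
    · exact Complex.continuous_im.comp ((continuous_apply v.1).comp continuous_subtype_val)
    · exact Complex.continuous_re.comp ((continuous_apply v.1).comp continuous_subtype_val)⟩

/-- the rational subalgebra of polynomials in the coordinates -/
def DD (n : ℕ) (ι : Type u) : Subalgebra ℚ C(XL n ι, ℝ) :=
  (MvPolynomial.aeval (R := ℚ) (coords n ι)).range


/-- the real subalgebra generated by `DD` -/
def SS (n : ℕ) (ι : Type u) : Subalgebra ℝ C(XL n ι, ℝ) :=
  Algebra.adjoin ℝ (DD n ι : Set C(XL n ι, ℝ))

lemma DD_closure_const (r : ℝ) :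
    (algebraMap ℝ C(XL n ι, ℝ)) r ∈ closure (DD n ι : Set C(XL n ι, ℝ)) := by
  rw [Metric.mem_closure_iff]
  intro ε hε
  obtain ⟨q, hq⟩ := exists_rat_near r hε
  have hC : (MvPolynomial.aeval (coords n ι)) (MvPolynomial.C q) = (algebraMap ℝ C(XL n ι, ℝ)) (q : ℝ) := by
    ext x
    simp [MvPolynomial.aeval_C, Algebra.algebraMap_eq_smul_one]
  refine ⟨(algebraMap ℝ C(XL n ι, ℝ)) (q : ℝ), ⟨MvPolynomial.C q, hC⟩, ?_⟩
  rw [dist_eq_norm, ← map_sub]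
  calc ‖(algebraMap ℝ C(XL n ι, ℝ)) (r - q)‖ ≤ |r - q| := by
        refine (ContinuousMap.norm_le _ (abs_nonneg _)).mpr fun x => ?_
        have : ((algebraMap ℝ C(↑(XL n ι), ℝ)) (r - ↑q)) x = (r - q) • (1:ℝ) := by
          rw [Algebra.algebraMap_eq_smul_one]; rfl
        rw [this]
        simp
    _ < ε := hq

lemma DD_closure_add {a b : C(XL n ι, ℝ)}
    (ha : a ∈ closure (DD n ι : Set C(XL n ι, ℝ)))
    (hb : b ∈ closure (DD n ι : Set C(XL n ι, ℝ))) :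
    a + b ∈ closure (DD n ι : Set C(XL n ι, ℝ)) := by
  rw [Metric.mem_closure_iff] at ha hb ⊢
  intro ε hε
  obtain ⟨da, hda, hda2⟩ := ha (ε/2) (by linarith)
  obtain ⟨db, hdb, hdb2⟩ := hb (ε/2) (by linarith)
  refine ⟨da + db, add_mem hda hdb, ?_⟩
  calc dist (a + b) (da + db) ≤ dist a da + dist b db := dist_add_add_le _ _ _ _
    _ < ε := by linarith

lemma DD_closure_mul {a b : C(XL n ι, ℝ)}
    (ha : a ∈ closure (DD n ι : Set C(XL n ι, ℝ)))
    (hb : b ∈ closure (DD n ι : Set C(XL n ι, ℝ))) :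
    a * b ∈ closure (DD n ι : Set C(XL n ι, ℝ)) := by
  rw [Metric.mem_closure_iff] at ha hb ⊢
  intro ε hε
  set δ : ℝ := min 1 (ε / (‖a‖ + ‖b‖ + 2)) with hδdef
  have hden : 0 < ‖a‖ + ‖b‖ + 2 := by positivity
  have hδpos : 0 < δ := lt_min one_pos (by positivity)
  have hδ1 : δ ≤ 1 := min_le_left _ _
  have hδ2 : δ ≤ ε / (‖a‖ + ‖b‖ + 2) := min_le_right _ _
  obtain ⟨da, hda, hda2⟩ := ha δ hδpos
  obtain ⟨db, hdb, hdb2⟩ := hb δ hδpos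
  refine ⟨da * db, mul_mem hda hdb, ?_⟩
  have hdbnorm : ‖db‖ ≤ ‖b‖ + δ := by
    calc ‖db‖ ≤ ‖b‖ + ‖b - db‖ := by
          have := norm_add_le (b - db) db; simpa using by
            calc ‖db‖ = ‖b - (b - db)‖ := by ring_nf
              _ ≤ ‖b‖ + ‖b - db‖ := norm_sub_le _ _
      _ ≤ ‖b‖ + δ := by
          rw [← dist_eq_norm] at *
          linarith [le_of_lt hdb2]
  have key : dist (a * b) (da * db) < ε := by
    have h1 : a * b - da * db = a * (b - db) + (a - da) * db := by ring
    rw [dist_eq_norm, h1]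
    calc ‖a * (b - db) + (a - da) * db‖ ≤ ‖a * (b - db)‖ + ‖(a - da) * db‖ := norm_add_le _ _
      _ ≤ ‖a‖ * ‖b - db‖ + ‖a - da‖ * ‖db‖ := add_le_add (norm_mul_le _ _) (norm_mul_le _ _)
      _ ≤ ‖a‖ * δ + δ * (‖b‖ + δ) := by
          have h2 : ‖b - db‖ ≤ δ := by rw [← dist_eq_norm]; exact le_of_lt hdb2
          have h3 : ‖a - da‖ ≤ δ := by rw [← dist_eq_norm]; exact le_of_lt hda2
          have := norm_nonneg a
          have := norm_nonneg db
          nlinarith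
      _ ≤ δ * (‖a‖ + ‖b‖ + 1) := by nlinarith [norm_nonneg a, norm_nonneg b]
      _ < ε := by
          have : δ * (‖a‖ + ‖b‖ + 2) ≤ ε := by
            rw [← le_div_iff₀ hden]
            exact hδ2
          nlinarith [norm_nonneg a, norm_nonneg b]
  exact key

lemma SS_subset_closure :
    (SS n ι : Set C(XL n ι, ℝ)) ⊆ closure (DD n ι : Set C(XL n ι, ℝ)) := by
  intro g hg
  induction hg using Algebra.adjoin_induction with
  | mem x hx => exact subset_closure hx
  | algebraMap r => exact DD_closure_const r
  | add x y hx hy ihx ihy => exact DD_closure_add ihx ihy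
  | mul x y hx hy ihx ihy => exact DD_closure_mul ihx ihy
lemma SS_separates : (SS n ι).SeparatesPoints := by
  intro x y hxy
  have hne : ∃ v : V ι, x.1 v ≠ y.1 v := by
    by_contra h
    push_neg at h
    exact hxy (Subtype.ext (funext h))
  obtain ⟨v, hv⟩ := hne
  have hri : (x.1 v).re ≠ (y.1 v).re ∨ (x.1 v).im ≠ (y.1 v).im := by
    by_contra h
    push_neg at h
    exact hv (Complex.ext h.1 h.2)
  have hmem : ∀ b : Bool, coords n ι (v, b) ∈ SS n ι := by
    intro b
    refine Algebra.subset_adjoin ⟨MvPolynomial.X (v, b), ?_⟩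
    simp [MvPolynomial.aeval_X]
  rcases hri with h | h
  · exact ⟨_, ⟨coords n ι (v, false), hmem false, rfl⟩, h⟩
  · exact ⟨_, ⟨coords n ι (v, true), hmem true, rfl⟩, h⟩

/-- every real continuous function on the limit is approximable by rational
polynomials in the coordinates -/
lemma approxR (f : C(XL n ι, ℝ)) {ε : ℝ} (hε : 0 < ε) :
    ∃ P : MvPolynomial (V ι × Bool) ℚ,
      ∀ x : XL n ι, |f x - MvPolynomial.aeval (coords n ι) P x| < ε := by
  obtain ⟨g, hg⟩ := ContinuousMap.exists_mem_subalgebra_near_continuousMap_of_separatesPoints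
    (SS n ι) SS_separates f (ε/2) (by linarith)
  have hgc : (g : C(XL n ι, ℝ)) ∈ closure (DD n ι : Set C(XL n ι, ℝ)) :=
    SS_subset_closure g.2
  rw [Metric.mem_closure_iff] at hgc
  obtain ⟨d, ⟨P, hP⟩, hd⟩ := hgc (ε/2) (by linarith)
  refine ⟨P, fun x => ?_⟩
  have h1 : |(g : C(XL n ι, ℝ)) x - f x| ≤ ‖(g : C(XL n ι, ℝ)) - f‖ := by
    simpa using ContinuousMap.norm_coe_le_norm ((g : C(XL n ι, ℝ)) - f) x
  have h2 : |(g : C(XL n ι, ℝ)) x - d x| ≤ dist (g : C(XL n ι, ℝ)) d :=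
    (Real.dist_eq _ _) ▸ ContinuousMap.dist_apply_le_dist x
  have h3 : (MvPolynomial.aeval (coords n ι) P) x = d x := by rw [← hP]; rfl
  rw [h3]
  have := abs_sub_abs_le_abs_sub (f x) (d x)
  calc |f x - d x| ≤ |f x - (g : C(XL n ι, ℝ)) x| + |(g : C(XL n ι, ℝ)) x - d x| := abs_sub_le _ _ _
    _ < ε/2 + ε/2 := by
        rw [abs_sub_comm]
        exact add_lt_add_of_lt_of_le (lt_of_le_of_lt h1 hg) (le_trans h2 (le_of_lt hd))
    _ = ε := by ring

/-- evaluation at a point, as a `ℚ`-algebra hom -/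
def evAt (x : XL n ι) : C(XL n ι, ℝ) →ₐ[ℚ] ℝ where
  toFun := fun F => F x
  map_one' := rfl
  map_mul' := fun _ _ => rfl
  map_zero' := rfl
  map_add' := fun _ _ => rfl
  commutes' := fun q => by
    show ((algebraMap ℚ C(XL n ι, ℝ)) q) x = _
    have : ((algebraMap ℚ C(XL n ι, ℝ)) q) x = q • (1:ℝ) := by
      rw [Algebra.algebraMap_eq_smul_one]; rfl
    rw [this, Rat.smul_one_eq_cast]
    rfl

lemma aeval_coords_apply (P : MvPolynomial (V ι × Bool) ℚ) (x : XL n ι) :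
    MvPolynomial.aeval (coords n ι) P x = MvPolynomial.aeval (fun v => coords n ι v x) P := by
  have := MvPolynomial.comp_aeval (R := ℚ) (coords n ι) (evAt (n := n) (ι := ι) x)
  exact DFunLike.congr_fun this P

lemma parts_proj_emb {x : XL n ι} {k K : ℕ} (h : k ≤ K) (j : J ι k) (b : Bool) :
    parts (proj n ι K x) (emb ι h j, b) = coords n ι (⟨k, j⟩, b) x := by
  have hc : proj n ι K x (emb ι h j) = x.1 ⟨k, j⟩ := xcompat x.2 h j
  unfold parts coords proj at *
  by_cases hb : b <;> simp only [hb, if_true, if_false] <;> rw [hc] <;> rfl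

/-- pushing a stage-`K` polynomial to a later stage -/
lemma push {K K' : ℕ} (h : K ≤ K') (p : PP (J ι K)) :
    ∃ p' : PP (J ι K'), ∀ x : XL n ι, evalR p' (proj n ι K' x) = evalR p (proj n ι K x) := by
  refine ⟨MvPolynomial.rename (fun w : J ι K × Bool => (emb ι h w.1, w.2)) p, fun x => ?_⟩
  rw [evalR, MvPolynomial.aeval_rename]
  rw [evalR]
  have harg : (parts (proj n ι K' x) ∘ fun w : J ι K × Bool => (emb ι h w.1, w.2)) =
      parts (proj n ι K x) := by
    funext w
    have h1 := parts_proj_emb (x := x) h w.1 w.2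
    have h2 : parts (proj n ι K x) w = coords n ι (⟨K, w.1⟩, w.2) x := by
      have := parts_proj_emb (x := x) (le_refl K) w.1 w.2
      rwa [emb_self] at this
    rw [Function.comp_apply, h1, h2]
  rw [harg]

/-- reducing a polynomial in all coordinates to a single stage -/
lemma reduce (P : MvPolynomial (V ι × Bool) ℚ) :
    ∃ (K : ℕ) (p : PP (J ι K)), ∀ x : XL n ι,
      evalR p (proj n ι K x) = MvPolynomial.aeval (coords n ι) P x := by
  obtain ⟨s, Q, rfl⟩ := MvPolynomial.exists_finset_rename P
  set K := s.sup (fun v => v.1.1) with hK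
  have hle : ∀ v : ↥s, v.1.1.1 ≤ K := fun v => Finset.le_sup (f := fun v => v.1.1) v.2
  refine ⟨K, MvPolynomial.rename (fun v : ↥s => ((emb ι (hle v) v.1.1.2 : J ι K), v.1.2)) Q,
    fun x => ?_⟩
  rw [evalR, MvPolynomial.aeval_rename, aeval_coords_apply, MvPolynomial.aeval_rename]
  have harg : (parts (proj n ι K x) ∘ fun v : ↥s => ((emb ι (hle v) v.1.1.2 : J ι K), v.1.2)) =
      ((fun v => coords n ι v x) ∘ Subtype.val) := by
    funext v
    rw [Function.comp_apply, Function.comp_apply]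
    have := parts_proj_emb (x := x) (hle v) v.1.1.2 v.1.2
    rw [this]
    rcases v with ⟨⟨⟨k, j⟩, b⟩, hv⟩
    rfl
  rw [harg]

/-- the key approximation: continuous complex functions on the limit are uniformly close
to stage functions coded by adjunction data -/
lemma approx_stage (f : C(XL n ι, ℂ)) {ε : ℝ} (hε : 0 < ε) :
    ∃ (K : ℕ) (p q : PP (J ι K)), ∀ x : XL n ι,
      ‖f x - ((evalR p (proj n ι K x) : ℝ) + Complex.I * (evalR q (proj n ι K x) : ℝ))‖ < ε := by
  have hc : Continuous fun x : XL n ι => f x := f.continuous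
  set fre : C(XL n ι, ℝ) := ⟨fun x => (f x).re, Complex.continuous_re.comp hc⟩ with hfre
  set fim : C(XL n ι, ℝ) := ⟨fun x => (f x).im, Complex.continuous_im.comp hc⟩ with hfim
  obtain ⟨P₁, hP₁⟩ := approxR (n := n) (ι := ι) fre (show (0:ℝ) < ε/3 by linarith)
  obtain ⟨P₂, hP₂⟩ := approxR (n := n) (ι := ι) fim (show (0:ℝ) < ε/3 by linarith)
  obtain ⟨K₁, p₁, hp₁⟩ := reduce (n := n) (ι := ι) P₁
  obtain ⟨K₂, p₂, hp₂⟩ := reduce (n := n) (ι := ι) P₂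
  obtain ⟨p, hp⟩ := push (n := n) (ι := ι) (le_max_left K₁ K₂) p₁
  obtain ⟨q, hq⟩ := push (n := n) (ι := ι) (le_max_right K₁ K₂) p₂
  refine ⟨max K₁ K₂, p, q, fun x => ?_⟩
  have e1 : evalR p (proj n ι (max K₁ K₂) x) = MvPolynomial.aeval (coords n ι) P₁ x := by
    rw [hp, hp₁]
  have e2 : evalR q (proj n ι (max K₁ K₂) x) = MvPolynomial.aeval (coords n ι) P₂ x := by
    rw [hq, hp₂]
  rw [e1, e2]
  have h1 := hP₁ x
  have h2 := hP₂ x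
  set u := (MvPolynomial.aeval (coords n ι)) P₁ x
  set w := (MvPolynomial.aeval (coords n ι)) P₂ x
  have hsplit : f x - ((u:ℂ) + Complex.I * (w:ℂ)) =
      (((f x).re - u : ℝ) : ℂ) + Complex.I * (((f x).im - w : ℝ) : ℂ) := by
    simp [Complex.ext_iff, Complex.mul_re, Complex.mul_im]
  rw [hsplit]
  calc ‖(((f x).re - u : ℝ) : ℂ) + Complex.I * (((f x).im - w : ℝ) : ℂ)‖
      ≤ ‖(((f x).re - u : ℝ) : ℂ)‖ + ‖Complex.I * (((f x).im - w : ℝ) : ℂ)‖ := norm_add_le _ _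
    _ = |(f x).re - u| + |(f x).im - w| := by
        rw [norm_mul]
        simp [← Complex.ofReal_sub, Complex.norm_real]
    _ < ε/3 + ε/3 := by
        refine add_lt_add ?_ ?_
        · exact h1
        · exact h2
    _ < ε := by linarith

/-- the limit space satisfies condition (*)ₙ -/
lemma XL_starN {n : ℕ} {ι : Type u} (hn : n ≠ 0) (f : C(XL n ι, ℂ)) {ε : ℝ} (hε : 0 < ε) :
    ∃ g : C(XL n ι, ℂ), ∀ x : XL n ι, ‖f x - g x ^ n‖ < ε := by
  obtain ⟨K, p, q, hpq⟩ := approx_stage (n := n) (ι := ι) f (show (0:ℝ) < ε/2 by linarith)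
  obtain ⟨m, hm⟩ := exists_nat_one_div_lt (show (0:ℝ) < ε/2 by linarith)
  set a : AA (J ι K) := (p, q, m) with ha
  refine ⟨⟨fun x => x.1 ⟨K+1, Sum.inr a⟩, (continuous_apply _).comp continuous_subtype_val⟩,
    fun x => ?_⟩
  show ‖f x - x.1 ⟨K+1, Sum.inr a⟩ ^ n‖ < ε
  have hproj : ((fun j => x.1 ⟨K+1, j⟩) ∘ Sum.inl) = proj n ι K x := by
    funext j
    exact (x.2 K).2 j
  have hcond := ((x.2 (K+1)).1.2 a).1
  rw [hproj] at hcond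
  have hevalC : evalC a (proj n ι K x) =
      ((evalR p (proj n ι K x) : ℝ) : ℂ) + Complex.I * ((evalR q (proj n ι K x) : ℝ) : ℂ) := rfl
  calc ‖f x - x.1 ⟨K+1, Sum.inr a⟩ ^ n‖
      = ‖(f x - evalC a (proj n ι K x)) + (evalC a (proj n ι K x) - x.1 ⟨K+1, Sum.inr a⟩ ^ n)‖ := by
        congr 1; ring
    _ ≤ ‖f x - evalC a (proj n ι K x)‖ + ‖evalC a (proj n ι K x) - x.1 ⟨K+1, Sum.inr a⟩ ^ n‖ :=
        norm_add_le _ _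
    _ < ε/2 + ε/2 := by
        refine add_lt_add_of_lt_of_le ?_ (le_trans hcond (le_of_lt ?_))
        · rw [hevalC]; exact hpq x
        · exact_mod_cast hm
    _ = ε := by ring

section Lift

variable {n : ℕ} {ι : Type u} {Z : Type u} [TopologicalSpace Z]

/-- the inductive step for lifting a map from a space in `A(n)` through the tower -/
lemma step_ex (hn : n ≠ 0)
    (hZ : ∀ (f : Z →ᵇ ℂ) (ε : ℝ), 0 < ε → ∃ g : Z →ᵇ ℂ, ‖f - g ^ n‖ < ε)
    {k : ℕ} (h : C(Z, J ι k → ℂ)) (hmem : ∀ z, h z ∈ XS n ι k) :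
    ∃ h' : C(Z, J ι (k+1) → ℂ), (∀ z, h' z ∈ XS n ι (k+1)) ∧
      ∀ z j, h' z (Sum.inl j) = h z j := by
  set B : AA (J ι k) → ℝ := fun a => polyBound (rr ι k) a.1 + polyBound (rr ι k) a.2.1 with hB
  have hFbound : ∀ (a : AA (J ι k)) (z : Z), ‖evalC a (h z)‖ ≤ B a := fun a z =>
    norm_evalC_le (XS_bound n ι k (h z) (hmem z))
  set F : AA (J ι k) → (Z →ᵇ ℂ) := fun a =>
    BoundedContinuousFunction.ofNormedAddCommGroup (fun z => evalC a (h z))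
      ((continuous_evalC a).comp h.continuous) (B a) (hFbound a) with hF
  have hex : ∀ a : AA (J ι k), ∃ G : Z →ᵇ ℂ, ‖F a - G ^ n‖ < 1/(a.2.2+1) := by
    intro a
    refine hZ (F a) _ ?_
    positivity
  choose G hG using hex
  have key : ∀ (a : AA (J ι k)) (z : Z), ‖evalC a (h z) - G a z ^ n‖ ≤ 1/(a.2.2+1) := by
    intro a z
    have h1 : (F a - G a ^ n) z = evalC a (h z) - G a z ^ n := by
      simp [hF]
    calc ‖evalC a (h z) - G a z ^ n‖ = ‖(F a - G a ^ n) z‖ := by rw [h1]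
      _ ≤ ‖F a - G a ^ n‖ := BoundedContinuousFunction.norm_coe_le_norm _ _
      _ ≤ 1/(a.2.2+1) := le_of_lt (hG a)
  have keyB : ∀ (a : AA (J ι k)) (z : Z), ‖G a z‖ ≤ rr ι (k+1) (Sum.inr a) := by
    intro a z
    have hR1 : (1:ℝ) ≤ rr ι (k+1) (Sum.inr a) := rr_inr_one_le ι k a
    have hpow : ‖G a z‖ ^ n ≤ rr ι (k+1) (Sum.inr a) := by
      have h1 : ‖G a z ^ n‖ ≤ ‖evalC a (h z)‖ + ‖evalC a (h z) - G a z ^ n‖ := by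
        calc ‖G a z ^ n‖ = ‖evalC a (h z) - (evalC a (h z) - G a z ^ n)‖ := by congr 1; ring
          _ ≤ ‖evalC a (h z)‖ + ‖evalC a (h z) - G a z ^ n‖ := norm_sub_le _ _
      have h2 : ‖evalC a (h z) - G a z ^ n‖ ≤ 1 := by
        refine (key a z).trans ?_
        rw [div_le_one (by positivity)]
        have : (0:ℝ) ≤ (a.2.2 : ℝ) := Nat.cast_nonneg _
        linarith
      rw [norm_pow] at h1
      calc ‖G a z‖ ^ n ≤ ‖evalC a (h z)‖ + ‖evalC a (h z) - G a z ^ n‖ := h1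
        _ ≤ B a + 1 := add_le_add (hFbound a z) h2
        _ = rr ι (k+1) (Sum.inr a) := by simp [hB, rr]
    by_contra hcon
    push_neg at hcon
    have h1 : (1:ℝ) ≤ ‖G a z‖ := le_of_lt (lt_of_le_of_lt hR1 hcon)
    have h2 : ‖G a z‖ ≤ ‖G a z‖ ^ n := le_self_pow₀ h1 hn
    linarith
  refine ⟨⟨fun z => Sum.elim (h z) (fun a => G a z), ?_⟩, fun z => ⟨?_, fun a => ⟨?_, ?_⟩⟩,
    fun z j => rfl⟩
  · refine continuous_pi fun j => ?_
    cases j with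
    | inl j => exact (continuous_apply j).comp h.continuous
    | inr a => exact (G a).continuous
  · have : (Sum.elim (h z) (fun a => G a z) ∘ Sum.inl) = h z := by funext j; rfl
    show h z ∈ XS n ι k
    exact hmem z
  · have : (Sum.elim (h z) (fun a => G a z) ∘ Sum.inl) = h z := by funext j; rfl
    show ‖evalC a (h z) - G a z ^ n‖ ≤ 1/(a.2.2+1)
    exact key a z
  · exact keyB a z

/-- one chosen step of the lifting tower -/
def stepC (hn : n ≠ 0)
    (hZ : ∀ (f : Z →ᵇ ℂ) (ε : ℝ), 0 < ε → ∃ g : Z →ᵇ ℂ, ‖f - g ^ n‖ < ε)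
    (k : ℕ) (h : {h : C(Z, J ι k → ℂ) // ∀ z, h z ∈ XS n ι k}) :
    {h' : C(Z, J ι (k+1) → ℂ) //
      (∀ z, h' z ∈ XS n ι (k+1)) ∧ ∀ z j, h' z (Sum.inl j) = h.1 z j} :=
  Classical.choice (by
    obtain ⟨h', h1, h2⟩ := step_ex hn hZ h.1 h.2
    exact ⟨⟨h', h1, h2⟩⟩)

/-- the lifting tower -/
def liftT (hn : n ≠ 0)
    (hZ : ∀ (f : Z →ᵇ ℂ) (ε : ℝ), 0 < ε → ∃ g : Z →ᵇ ℂ, ‖f - g ^ n‖ < ε)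
    (h0 : C(Z, J ι 0 → ℂ)) (hm0 : ∀ z, h0 z ∈ XS n ι 0) :
    ∀ k, {h : C(Z, J ι k → ℂ) // ∀ z, h z ∈ XS n ι k}
  | 0 => ⟨h0, hm0⟩
  | k+1 => ⟨(stepC hn hZ k (liftT hn hZ h0 hm0 k)).1,
      (stepC hn hZ k (liftT hn hZ h0 hm0 k)).2.1⟩

lemma liftT_compat (hn : n ≠ 0)
    (hZ : ∀ (f : Z →ᵇ ℂ) (ε : ℝ), 0 < ε → ∃ g : Z →ᵇ ℂ, ‖f - g ^ n‖ < ε)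
    (h0 : C(Z, J ι 0 → ℂ)) (hm0 : ∀ z, h0 z ∈ XS n ι 0) (k : ℕ) (z : Z) (j : J ι k) :
    (liftT hn hZ h0 hm0 (k+1)).1 z (Sum.inl j) = (liftT hn hZ h0 hm0 k).1 z j :=
  (stepC hn hZ k (liftT hn hZ h0 hm0 k)).2.2 z j

end Lift

section Card
open Cardinal

variable {n : ℕ} {ι : Type u}

lemma card_PP {σ : Type u} (hι : ℵ₀ ≤ #ι) (h : #σ ≤ #ι) : #(PP σ) ≤ #ι := by
  have h1 := MvPolynomial.cardinalMk_le_max_lift (σ := σ × Bool) (R := ℚ)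
  have h2 : #(σ × Bool) ≤ #ι := by
    rw [Cardinal.mk_prod, Cardinal.lift_uzero]
    refine le_trans (Cardinal.mul_le_max _ _) ?_
    refine sup_le (sup_le h ?_) hι
    refine le_trans ?_ hι
    exact le_of_lt (lt_aleph0_of_finite _)
  refine le_trans h1 ?_
  refine sup_le (sup_le ?_ ?_) hι
  · rw [Cardinal.mkRat, Cardinal.lift_aleph0]; exact hι
  · rw [Cardinal.lift_uzero]; exact h2

lemma card_AA {σ : Type u} (hι : ℵ₀ ≤ #ι) (h : #σ ≤ #ι) : #(AA σ) ≤ #ι := by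
  have hp := card_PP (ι := ι) hι h
  have h2 : #(PP σ × ℕ) ≤ #ι := by
    rw [Cardinal.mk_prod, Cardinal.lift_uzero]
    refine le_trans (Cardinal.mul_le_max _ _) ?_
    refine sup_le (sup_le hp ?_) hι
    simpa using hι
  rw [show AA σ = (PP σ × (PP σ × ℕ)) from rfl, Cardinal.mk_prod]
  simp only [Cardinal.lift_id]
  refine le_trans (Cardinal.mul_le_max _ _) ?_
  exact sup_le (sup_le hp h2) hι

lemma card_J (hι : ℵ₀ ≤ #ι) : ∀ k, #(J ι k) ≤ #ι := by
  intro k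
  induction k with
  | zero => exact le_of_eq rfl
  | succ k ih =>
      rw [show J ι (k+1) = (J ι k ⊕ AA (J ι k)) from rfl, Cardinal.mk_sum,
        Cardinal.lift_id, Cardinal.lift_id]
      exact Cardinal.add_le_of_le hι ih (card_AA hι ih)

lemma card_V (hι : ℵ₀ ≤ #ι) : #(V ι) ≤ #ι := by
  have h1 : #(V ι) = Cardinal.sum (fun k : ℕ => #(J ι k)) := Cardinal.mk_sigma _
  rw [h1]
  refine le_trans (Cardinal.sum_le_sum _ (fun _ => #ι) (fun k => card_J hι k)) ?_
  rw [Cardinal.sum_const, Cardinal.lift_uzero, Cardinal.mk_nat, Cardinal.lift_aleph0]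
  rw [Cardinal.mul_eq_max (le_refl _) hι]
  exact sup_le hι (le_refl _)

lemma V_inj : Function.Injective (fun i : ι => (⟨0, i⟩ : V ι)) := by
  intro a b hab
  cases hab
  rfl

lemma infinite_V (hι : ℵ₀ ≤ #ι) : Infinite (V ι) := by
  have : Infinite ι := Cardinal.infinite_iff.mpr hι
  exact Infinite.of_injective (fun i : ι => (⟨0, i⟩ : V ι)) V_inj

/-- the limit space has weight at most `#ι` -/
lemma XL_weight (hι : ℵ₀ ≤ #ι) :
    ∃ B : Set (Set (XL n ι)), IsTopologicalBasis B ∧ #B ≤ #ι := by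
  classical
  obtain ⟨b₀, hb₀count, hb₀empty, hb₀⟩ := exists_countable_basis ℂ
  have hb₀ne : b₀.Nonempty := by
    rcases Set.eq_empty_or_nonempty b₀ with h | h
    · exfalso
      have := hb₀.sUnion_eq
      rw [h] at this
      simp only [Set.sUnion_empty] at this
      exact (Set.univ_nonempty (α := ℂ)).ne_empty this.symm
    · exact h
  obtain ⟨e, he⟩ := Set.Countable.exists_eq_range hb₀count hb₀ne
  set Bpi := { S : Set (V ι → ℂ) | ∃ (U : V ι → Set ℂ) (F : Finset (V ι)),
      (∀ i, i ∈ F → U i ∈ b₀) ∧ S = (F : Set (V ι)).pi U } with hBpi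
  have hbasis : IsTopologicalBasis Bpi := isTopologicalBasis_pi (fun _ => hb₀)
  have hsub : IsTopologicalBasis
      ((Set.preimage (Subtype.val : XL n ι → (V ι → ℂ))) '' Bpi) :=
    isTopologicalBasis_subtype hbasis (· ∈ XL n ι)
  refine ⟨_, hsub, ?_⟩
  have h1 : #((Set.preimage (Subtype.val : XL n ι → (V ι → ℂ))) '' Bpi) ≤ #Bpi :=
    Cardinal.mk_image_le
  refine le_trans h1 ?_
  -- bound the cardinality of the pi-basis
  set φ : Finset (V ι × ℕ) → Set (V ι → ℂ) := fun G =>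
    ⋂ (p : V ι × ℕ) (_ : p ∈ G), (fun x : V ι → ℂ => x p.1) ⁻¹' e p.2 with hφ
  have hrange : Bpi ⊆ Set.range φ := by
    rintro S ⟨U, F, hU, rfl⟩
    have hex : ∀ i : ↥F, ∃ m : ℕ, e m = U i.1 := by
      intro i
      have : U i.1 ∈ b₀ := hU i.1 i.2
      rw [he] at this
      obtain ⟨m, hm⟩ := this
      exact ⟨m, hm⟩
    choose mf hmf using hex
    refine ⟨F.attach.image (fun i => (i.1, mf i)), ?_⟩
    rw [hφ]
    ext x
    simp only [Set.mem_iInter, Finset.mem_image, Finset.mem_attach, Set.mem_preimage,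
      Set.mem_pi, Finset.mem_coe, true_and]
    constructor
    · intro hx i hi
      have := hx (i, mf ⟨i, hi⟩) ⟨⟨i, hi⟩, rfl⟩
      rwa [hmf ⟨i, hi⟩] at this
    · rintro hx p ⟨i, rfl⟩
      rw [hmf i]
      exact hx i.1 i.2
  refine le_trans (Cardinal.mk_le_mk_of_subset hrange) ?_
  refine le_trans Cardinal.mk_range_le ?_
  haveI := infinite_V (ι := ι) hι
  rw [Cardinal.mk_finset_of_infinite]
  rw [Cardinal.mk_prod, Cardinal.lift_uzero, Cardinal.mk_nat, Cardinal.lift_aleph0]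
  have hV : ℵ₀ ≤ #(V ι) :=
    le_trans hι (Cardinal.mk_le_of_injective (V_inj (ι := ι)))
  rw [Cardinal.mul_eq_max hV (le_refl _)]
  exact sup_le (card_V hι) hι

end Card

section Main

variable {n : ℕ} {ι : Type u}

/-- the canonical map from the limit space to the Tychonoff cube -/
def theF (n : ℕ) (ι : Type u) : C(XL n ι, ι → unitInterval) :=
  ⟨fun x i => ⟨(x.1 ⟨0, i⟩).re, ((x.2 0).1 i).2⟩, by
    refine continuous_pi fun i => Continuous.subtype_mk ?_ _
    exact Complex.continuous_re.comp ((continuous_apply _).comp continuous_subtype_val)⟩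

/-- the universal lifting property of the limit space -/
lemma main_lift (hn0 : n ≠ 0) (Z : Type u) [tZ : TopologicalSpace Z]
    (hZ : ∀ (f : Z →ᵇ ℂ) (ε : ℝ), 0 < ε → ∃ g : Z →ᵇ ℂ, ‖f - g ^ n‖ < ε)
    (g : C(Z, ι → unitInterval)) :
    ∃ gbar : C(Z, XL n ι), ∀ z, theF n ι (gbar z) = g z := by
  set h0 : C(Z, J ι 0 → ℂ) := ⟨fun z (i : J ι 0) => ((g z i : ℝ) : ℂ), by
    refine continuous_pi fun i => ?_
    exact Complex.continuous_ofReal.comp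
      (continuous_subtype_val.comp ((continuous_apply i).comp g.continuous))⟩ with hh0
  have hm0 : ∀ z, h0 z ∈ XS n ι 0 := by
    intro z i
    show ((g z i : ℝ) : ℂ).im = 0 ∧ ((g z i : ℝ) : ℂ).re ∈ Set.Icc (0:ℝ) 1
    refine ⟨Complex.ofReal_im _, ?_⟩
    rw [Complex.ofReal_re]
    exact (g z i).2
  have hmem : ∀ z, (fun v : V ι => (liftT hn0 hZ h0 hm0 v.1).1 z v.2) ∈ XL n ι := by
    intro z k
    exact ⟨(liftT hn0 hZ h0 hm0 k).2 z, fun j => liftT_compat hn0 hZ h0 hm0 k z j⟩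
  refine ⟨⟨fun z => ⟨fun v => (liftT hn0 hZ h0 hm0 v.1).1 z v.2, hmem z⟩, ?_⟩, ?_⟩
  · refine Continuous.subtype_mk (continuous_pi fun v => ?_) _
    exact (continuous_apply v.2).comp (liftT hn0 hZ h0 hm0 v.1).1.continuous
  · intro z
    funext i
    refine Subtype.ext ?_
    show ((liftT hn0 hZ h0 hm0 0).1 z i).re = (g z i : ℝ)
    have h1 : (liftT hn0 hZ h0 hm0 0).1 z i = ((g z i : ℝ) : ℂ) := rfl
    rw [h1, Complex.ofReal_re]

end Main

end Star6

/-- for every `n ≥ 2` and every infinite cardinal `τ` there is a compact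
Hausdorff space `X` of weight `≤ τ` satisfying condition `(*)ₙ` together with a
continuous map `f : X → [0,1]^τ` which is invertible for the class `A(n)`: every
continuous map `g : Z → [0,1]^τ` from a completely regular (Tychonoff) space `Z`
satisfying condition `(*)ₙ` lifts through `f`. -/
theorem exists_starN_invertible_map_to_cube
    (n : ℕ) (hn : 2 ≤ n) (τ : Cardinal.{u}) (hτ : ℵ₀ ≤ τ)
    (ι : Type u) (hι : #ι = τ) :
    ∃ (X : Type u) (tX : TopologicalSpace X),
      @CompactSpace X tX ∧ @T2Space X tX ∧ @SatisfiesStarN n X tX ∧ @HasWeightLE X tX τ ∧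
      ∃ f : @ContinuousMap X (ι → unitInterval) tX _,
        ∀ (Z : Type u) (tZ : TopologicalSpace Z),
          @T35Space Z tZ → @SatisfiesStarNBdd n Z tZ →
          ∀ g : @ContinuousMap Z (ι → unitInterval) tZ _,
            ∃ gbar : @ContinuousMap Z X tZ tX, ∀ z : Z, f (gbar z) = g z := by
  subst hι
  have hn0 : n ≠ 0 := by omega
  obtain ⟨B, hB, hBcard⟩ := Star6.XL_weight (n := n) (ι := ι) hτ
  refine ⟨Star6.XL n ι, inferInstance, Star6.XLcompact n ι, inferInstance,
    fun f ε hε => Star6.XL_starN hn0 f hε, ⟨B, hB, hBcard⟩, Star6.theF n ι, ?_⟩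
  intro Z tZ _ hZ g
  exact Star6.main_lift hn0 Z hZ g
end
end

section
/- Fix an integer n ≥ 2. Let X be a unital C*-algebra and let {X_α : α ∈ A} be a family of closed *-subalgebras of X, each containing the unit of X, which is directed by inclusion and whose union ⋃_{α∈A} X_α is dense in X. Suppose that for every α, every a ∈ X_α which is invertible in X_α (i.e., there exists c ∈ X_α with ac = ca = 1) with ‖a‖ ≤ 1, and every ε > 0, there exists b ∈ X_α with ‖b‖ ≤ 1 and ‖a − bⁿ‖ < ε. Then for every invertible a ∈ X with ‖a‖ ≤ 1 and every ε > 0 there exists b ∈ X with ‖b‖ ≤ 1 and ‖a − bⁿ‖ < ε. -/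
universe u

/-- let a unital C*-algebra `X` be the closure of the union of a family of
closed unital *-subalgebras directed by inclusion. If in each subalgebra every element
that is invertible within the subalgebra and of norm `≤ 1` admits approximate `n`-th
roots of norm `≤ 1` inside the subalgebra, then every invertible element of `X` of norm
`≤ 1` admits approximate `n`-th roots of norm `≤ 1` in `X`. -/
theorem approx_nth_root_of_invertible_of_directed_union
    (n : ℕ) (hn : 2 ≤ n) (X : Type u) [CStarAlgebra X]
    {A : Type*} (S : A → StarSubalgebra ℂ X)
    (hclosed : ∀ a : A, IsClosed (S a : Set X))
    (hdir : ∀ a b : A, ∃ c : A, S a ≤ S c ∧ S b ≤ S c)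
    (hdense : Dense (⋃ a : A, (S a : Set X)))
    (hroot : ∀ (a : A) (x : X), x ∈ S a →
      (∃ c ∈ S a, x * c = 1 ∧ c * x = 1) → ‖x‖ ≤ 1 → ∀ ε : ℝ, 0 < ε →
      ∃ b ∈ S a, ‖b‖ ≤ 1 ∧ ‖x - b ^ n‖ < ε) :
    ∀ x : X, IsUnit x → ‖x‖ ≤ 1 → ∀ ε : ℝ, 0 < ε →
      ∃ b : X, ‖b‖ ≤ 1 ∧ ‖x - b ^ n‖ < ε := by
  intro x hx hx1 ε hε
  -- units form an open set
  have hopen : IsOpen {y : X | IsUnit y} := Units.isOpen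
  obtain ⟨r, hr, hball⟩ := Metric.isOpen_iff.mp hopen x hx
  set δ : ℝ := min (ε / 4) (r / 2) with hδdef
  have hδpos : 0 < δ := lt_min (by linarith) (by linarith)
  have hδε : δ ≤ ε / 4 := min_le_left _ _
  have hδr : δ < r := lt_of_le_of_lt (min_le_right _ _) (by linarith)
  -- choose y in the union close to x
  obtain ⟨y, hy_close, hy_mem⟩ := Metric.dense_iff.mp hdense x δ hδpos
  obtain ⟨s, hy_s⟩ := Set.mem_iUnion.mp hy_mem
  have hxy : ‖x - y‖ < δ := by
    rw [← dist_eq_norm]; rw [Metric.mem_ball, dist_comm] at hy_close; exact hy_close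
  -- y is a unit in X
  have hy_unit : IsUnit y := hball (by
    rw [Metric.mem_ball, dist_eq_norm, ← norm_neg, neg_sub]
    exact hxy.trans hδr)
  -- rescale
  have hynorm : ‖y‖ ≤ 1 + δ := by
    calc ‖y‖ = ‖x - (x - y)‖ := by rw [sub_sub_cancel]
    _ ≤ ‖x‖ + ‖x - y‖ := norm_sub_le _ _
    _ ≤ 1 + δ := add_le_add hx1 hxy.le
  set c : ℂ := ((1 + δ : ℝ) : ℂ)⁻¹ with hc
  have h1δ : (0:ℝ) < 1 + δ := by linarith
  have hc0 : c ≠ 0 := by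
    simp only [hc, ne_eq, inv_eq_zero, Complex.ofReal_eq_zero]
    exact ne_of_gt h1δ
  set z : X := c • y with hz
  have hz_mem : z ∈ S s := (S s).smul_mem hy_s c
  have hz_norm : ‖z‖ ≤ 1 := by
    rw [hz, norm_smul, hc, norm_inv, Complex.norm_real, Real.norm_of_nonneg h1δ.le]
    rw [inv_mul_le_iff₀ h1δ, mul_one]
    exact hynorm
  have hz_unit : IsUnit z := by
    rw [hz]
    obtain ⟨u, hu⟩ := hy_unit
    exact ⟨(Units.mk0 c hc0) • u, by simp [hu, Units.smul_def]⟩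
  -- z invertible within S s by spectral permanence
  haveI : IsClosed ((S s : Set X)) := hclosed s
  have hz_unit_S : IsUnit (⟨z, hz_mem⟩ : S s) := by
    rw [← (S s).coe_isUnit]
    exact hz_unit
  obtain ⟨u, hu⟩ := hz_unit_S
  have hu' : ((u : S s) : X) = z := congrArg Subtype.val hu
  have hinv : ∃ c' ∈ S s, z * c' = 1 ∧ c' * z = 1 := by
    refine ⟨((u⁻¹ : (S s)ˣ) : S s), SetLike.coe_mem _, ?_, ?_⟩
    · calc z * ((u⁻¹ : (S s)ˣ) : S s) = (((u : S s) * (u⁻¹ : (S s)ˣ) : S s) : X) := by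
            rw [MulMemClass.coe_mul, hu']
      _ = 1 := by rw [u.mul_inv]; rfl
    · calc ((u⁻¹ : (S s)ˣ) : S s) * z = (((u⁻¹ : (S s)ˣ) * (u : S s) : S s) : X) := by
            rw [MulMemClass.coe_mul, hu']
      _ = 1 := by rw [u.inv_mul]; rfl
  -- apply hroot
  obtain ⟨b, hb_mem, hb_norm, hb_close⟩ := hroot s z hz_mem hinv hz_norm (ε / 4) (by linarith)
  refine ⟨b, hb_norm, ?_⟩
  -- estimate ‖x - b^n‖ ≤ ‖x - y‖ + ‖y - z‖ + ‖z - b^n‖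
  have hyz : ‖y - z‖ ≤ δ := by
    have : y - z = ((1 : ℂ) - c) • y := by rw [hz, sub_smul, one_smul]
    rw [this, norm_smul]
    have hc_norm : ‖(1 : ℂ) - c‖ = δ / (1 + δ) := by
      rw [hc]
      have hne : (1 + (δ : ℂ)) ≠ 0 := by
        have : ((1 + δ : ℝ) : ℂ) ≠ 0 := by exact_mod_cast ne_of_gt h1δ
        push_cast at this; exact this
      rw [show (1 : ℂ) - ((1 + δ : ℝ) : ℂ)⁻¹ = ((δ / (1 + δ) : ℝ) : ℂ) by
        push_cast
        field_simp
        ring]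
      rw [Complex.norm_real, Real.norm_of_nonneg (by positivity)]
    rw [hc_norm]
    calc δ / (1 + δ) * ‖y‖ ≤ δ / (1 + δ) * (1 + δ) := by
          apply mul_le_mul_of_nonneg_left hynorm (by positivity)
    _ = δ := by field_simp
  calc ‖x - b ^ n‖ = ‖(x - y) + (y - z) + (z - b ^ n)‖ := by congr 1; abel
  _ ≤ ‖(x - y) + (y - z)‖ + ‖z - b ^ n‖ := norm_add_le _ _
  _ ≤ ‖x - y‖ + ‖y - z‖ + ‖z - b ^ n‖ := by gcongr; exact norm_add_le _ _
  _ ≤ ‖x - y‖ + δ + ‖z - b ^ n‖ := by gcongr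
  _ < δ + δ + ε / 4 := by gcongr
  _ ≤ ε := by linarith
end

section
/- Fix an integer n ≥ 2. Let X be a unital C*-algebra with the approximate n-th root property. Then there exists a family {X_α : α ∈ A} of separable closed *-subalgebras of X, each containing the unit of X and each having the approximate n-th root property, which is directed by inclusion and such that every countable subset of X is contained in some X_α; in particular X = ⋃_{α∈A} X_α. -/
universe u

/-- A unital C*-algebra has the approximate `n`-th root property if every element of
norm `≤ 1` can be approximated by `n`-th powers of elements of norm `≤ 1`. -/
def ApproxNthRootProperty (n : ℕ) (X : Type u) [CStarAlgebra X] : Prop :=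
  ∀ x : X, ‖x‖ ≤ 1 → ∀ ε : ℝ, 0 < ε → ∃ b : X, ‖b‖ ≤ 1 ∧ ‖x - b ^ n‖ < ε

/-!
For countable `C` the closure of `adjoin C` is separable, but the approximate roots of its
elements may lie outside it. So we iterate: the unit ball of `adjoin Cₖ` is separable, so
countably many approximate roots (taken in `X`) of a countable dense subset of it serve for all
its elements, and adding them to `Cₖ` gives `Cₖ₊₁`. The unit ball of `adjoin (⋃ₖ Cₖ)` is the
increasing union of those of the `adjoin Cₖ`, so `closure (adjoin (⋃ₖ Cₖ))` has approximate roots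
in itself. Indexing these algebras by themselves gives the family: two of them lie in the one
built from countable dense subsets of both.
-/

open Set Metric TopologicalSpace

theorem StarConvex.closure_inter_closedBall_subset {E : Type*} [SeminormedAddCommGroup E]
    [NormedSpace ℝ E] {s : Set E} (hs : StarConvex ℝ 0 s) {r : ℝ} (hr : 0 < r) :
    closure s ∩ closedBall 0 r ⊆ closure (s ∩ closedBall 0 r) := by
  -- the radial retraction onto `closedBall 0 r` is continuous and maps `s` into itself
  set ρ : E → E := fun y => (r / max r ‖y‖) • y
  have hmax : ∀ y : E, 0 < max r ‖y‖ := fun y => hr.trans_le (le_max_left _ _)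
  have hρ : Continuous ρ := by
    exact Continuous.smul (continuous_const.div (by fun_prop) fun y => (hmax y).ne') continuous_id
  have hρs : MapsTo ρ s (s ∩ closedBall 0 r) := fun y hy => by
    refine ⟨hs.smul_mem hy (div_nonneg hr.le (hmax y).le)
      ((div_le_one (hmax y)).2 (le_max_left _ _)), ?_⟩
    rw [mem_closedBall_zero_iff, norm_smul, Real.norm_of_nonneg (div_nonneg hr.le (hmax y).le),
      div_mul_eq_mul_div, div_le_iff₀ (hmax y)]
    exact mul_le_mul_of_nonneg_left (le_max_right _ _) hr.le
  rintro x ⟨hx, hxr⟩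
  have hρx : ρ x = x := by
    rw [mem_closedBall_zero_iff] at hxr
    simp [ρ, max_eq_left hxr, hr.ne']
  rw [← hρx]
  exact map_mem_closure hρ hx hρs

theorem TopologicalSpace.IsSeparable.starAlgebraAdjoin {R A : Type*} [CommSemiring R] [StarRing R]
    [TopologicalSpace R] [SeparableSpace R] [Semiring A] [StarRing A] [Algebra R A]
    [StarModule R A] [TopologicalSpace A] [ContinuousAdd A] [ContinuousSMul R A] {s : Set A}
    (hs : s.Countable) : IsSeparable (StarAlgebra.adjoin R s : Set A) := by
  rw [← StarSubalgebra.coe_toSubalgebra, StarAlgebra.adjoin_toSubalgebra,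
    ← Subalgebra.coe_toSubmodule, Algebra.adjoin_eq_span, Submonoid.closure_eq_image_prod,
    ← range_list_map_coe]
  have := (hs.union (hs.preimage star_injective)).to_subtype
  have hprod : (List.prod '' range (List.map ((↑) : ↥(s ∪ star s) → A))).Countable :=
    (countable_range _).image _
  exact hprod.isSeparable.span

theorem StarAlgebra.coe_adjoin_iUnion_of_directed {R A ι : Type*} [Nonempty ι] [CommSemiring R]
    [StarRing R] [Semiring A] [StarRing A] [Algebra R A] [StarModule R A] {s : ι → Set A}
    (hs : Directed (· ⊆ ·) s) :
    (adjoin R (⋃ i, s i) : Set A) = ⋃ i, (adjoin R (s i) : Set A) := by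
  have hdir : Directed (· ≤ ·) fun i => adjoin R (s i) :=
    fun i j => (hs i j).imp fun _ hk => ⟨adjoin_mono hk.1, adjoin_mono hk.2⟩
  rw [← StarSubalgebra.coe_iSup_of_directed hdir]
  exact congrArg SetLike.coe <| le_antisymm
    (adjoin_le <| iUnion_subset fun i => (subset_adjoin R (s i)).trans
      (SetLike.coe_subset_coe.2 (le_iSup (fun i => adjoin R (s i)) i)))
    (iSup_le fun i => adjoin_mono (subset_iUnion s i))

section ApproxRoots

variable {R : Type*} [SeminormedRing R]

def HasApproxNthRootsIn (n : ℕ) (s t : Set R) : Prop :=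
  s ∩ closedBall 0 1 ⊆ closure ((· ^ n) '' (t ∩ closedBall 0 1))

variable {n : ℕ}

theorem hasApproxNthRootsIn_iff {s t : Set R} :
    HasApproxNthRootsIn n s t ↔ ∀ x ∈ s, ‖x‖ ≤ 1 → ∀ ε : ℝ, 0 < ε →
      ∃ b ∈ t, ‖b‖ ≤ 1 ∧ ‖x - b ^ n‖ < ε := by
  simp only [HasApproxNthRootsIn, subset_def, mem_inter_iff, mem_closedBall_zero_iff,
    Metric.mem_closure_iff, exists_mem_image, dist_eq_norm, and_imp, and_assoc]

theorem HasApproxNthRootsIn.mono {s s' t t' : Set R} (h : HasApproxNthRootsIn n s t)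
    (hs : s' ⊆ s) (ht : t ⊆ t') : HasApproxNthRootsIn n s' t' :=
  (inter_subset_inter_left _ hs).trans <| h.trans <|
    closure_mono <| image_mono <| inter_subset_inter_left _ ht

theorem HasApproxNthRootsIn.iUnion_left {ι : Sort*} {s : ι → Set R} {t : Set R}
    (h : ∀ i, HasApproxNthRootsIn n (s i) t) : HasApproxNthRootsIn n (⋃ i, s i) t := by
  rw [HasApproxNthRootsIn, iUnion_inter]
  exact iUnion_subset h

theorem HasApproxNthRootsIn.closure_left [NormedSpace ℝ R] {s t : Set R}
    (h : HasApproxNthRootsIn n s t) (hs : StarConvex ℝ 0 s) :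
    HasApproxNthRootsIn n (closure s) t :=
  (hs.closure_inter_closedBall_subset one_pos).trans
    (closure_minimal (s := s ∩ closedBall 0 1) h isClosed_closure)

theorem HasApproxNthRootsIn.exists_countable_subset {s t : Set R} (h : HasApproxNthRootsIn n s t)
    (hs : IsSeparable s) : ∃ t' ⊆ t, t'.Countable ∧ HasApproxNthRootsIn n s t' := by
  obtain ⟨D, hDs, hD, hsD⟩ :=
    (hs.mono inter_subset_left : IsSeparable (s ∩ closedBall 0 1)).exists_countable_dense_subset
  have := hD.to_subtype
  choose b hbt hb hbd using fun (d : D) (k : ℕ) =>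
    hasApproxNthRootsIn_iff.1 h d (hDs d.2).1 (mem_closedBall_zero_iff.1 (hDs d.2).2)
      (1 / (k + 1)) (by positivity)
  refine ⟨range (Function.uncurry b), range_subset_iff.2 fun _ => hbt _ _, countable_range _,
    hsD.trans (closure_minimal (fun d hd => ?_) isClosed_closure)⟩
  refine Metric.mem_closure_iff.2 fun ε hε => ?_
  obtain ⟨k, hk⟩ := exists_nat_one_div_lt hε
  refine ⟨b ⟨d, hd⟩ k ^ n, mem_image_of_mem _ ⟨⟨(⟨d, hd⟩, k), rfl⟩, ?_⟩, ?_⟩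
  · exact mem_closedBall_zero_iff.2 (hb _ _)
  · exact (dist_eq_norm _ _).trans_lt ((hbd ⟨d, hd⟩ k).trans hk)

end ApproxRoots

theorem exists_starSubalgebra_hasApproxNthRootsIn {n : ℕ} {X : Type*} [CStarAlgebra X]
    (hX : HasApproxNthRootsIn n (univ : Set X) univ) {C : Set X} (hC : C.Countable) :
    ∃ Y : StarSubalgebra ℂ X, C ⊆ Y ∧ IsClosed (Y : Set X) ∧ IsSeparable (Y : Set X) ∧
      HasApproxNthRootsIn n (Y : Set X) Y := by
  have step : ∀ D : {D : Set X // D.Countable}, ∃ E : {E : Set X // E.Countable},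
      D.1 ⊆ E.1 ∧ HasApproxNthRootsIn n (StarAlgebra.adjoin ℂ D.1 : Set X) E.1 := by
    rintro ⟨D, hD⟩
    obtain ⟨t, -, ht, hDt⟩ := (hX.mono (subset_univ _) subset_rfl).exists_countable_subset
      (IsSeparable.starAlgebraAdjoin (R := ℂ) hD)
    exact ⟨⟨D ∪ t, hD.union ht⟩, subset_union_left, hDt.mono subset_rfl subset_union_right⟩
  choose G hGsub hGroots using step
  set F : ℕ → Set X := fun k => (G^[k] ⟨C, hC⟩).1
  have hFsucc (k : ℕ) : F (k + 1) = (G (G^[k] ⟨C, hC⟩)).1 := by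
    simp only [F, Function.iterate_succ_apply']
  have hF : Monotone F := monotone_nat_of_le_succ fun k => hFsucc k ▸ hGsub _
  set U := ⋃ k, F k
  have hU : HasApproxNthRootsIn n (StarAlgebra.adjoin ℂ U : Set X) U := by
    rw [StarAlgebra.coe_adjoin_iUnion_of_directed hF.directed_le]
    exact HasApproxNthRootsIn.iUnion_left fun k =>
      (hGroots _).mono subset_rfl ((hFsucc k).symm ▸ subset_iUnion F (k + 1))
  set Y := (StarAlgebra.adjoin ℂ U).topologicalClosure
  have hUY : U ⊆ Y := (StarAlgebra.subset_adjoin ℂ U).trans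
    (StarSubalgebra.le_topologicalClosure _)
  refine ⟨Y, (subset_iUnion F 0).trans hUY, StarSubalgebra.isClosed_topologicalClosure _, ?_, ?_⟩
  · have hUc : U.Countable := countable_iUnion fun k => (G^[k] ⟨C, hC⟩).2
    exact (IsSeparable.starAlgebraAdjoin (R := ℂ) hUc).closure
  · have hconvex : StarConvex ℝ 0 (StarAlgebra.adjoin ℂ U : Set X) :=
      ((StarAlgebra.adjoin ℂ U).toSubalgebra.toSubmodule.restrictScalars ℝ).starConvex
    exact (hU.closure_left hconvex).mono subset_rfl hUY

theorem exists_directed_family_of_separable_subalgebras_general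
    (n : ℕ) (X : Type u) [CStarAlgebra X]
    (hX : ApproxNthRootProperty n X) :
    ∃ (A : Type u) (S : A → StarSubalgebra ℂ X),
      (∀ a : A, IsClosed (S a : Set X)) ∧
      (∀ a : A, TopologicalSpace.SeparableSpace (S a)) ∧
      (∀ (a : A) (x : X), x ∈ S a → ‖x‖ ≤ 1 → ∀ ε : ℝ, 0 < ε →
        ∃ b ∈ S a, ‖b‖ ≤ 1 ∧ ‖x - b ^ n‖ < ε) ∧
      (∀ a b : A, ∃ c : A, S a ≤ S c ∧ S b ≤ S c) ∧
      (∀ C : Set X, C.Countable → ∃ a : A, C ⊆ S a) ∧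
      (⋃ a : A, (S a : Set X)) = Set.univ := by
  have hroots : HasApproxNthRootsIn n (univ : Set X) univ :=
    hasApproxNthRootsIn_iff.2 fun x _ hx ε hε => (hX x hx ε hε).imp fun b hb => ⟨trivial, hb⟩
  let A := {Y : StarSubalgebra ℂ X //
    IsClosed (Y : Set X) ∧ IsSeparable (Y : Set X) ∧ HasApproxNthRootsIn n (Y : Set X) Y}
  have hcover (C : Set X) (hC : C.Countable) : ∃ a : A, C ⊆ a.1 := by
    obtain ⟨Y, hCY, hY⟩ := exists_starSubalgebra_hasApproxNthRootsIn hroots hC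
    exact ⟨⟨Y, hY⟩, hCY⟩
  refine ⟨A, Subtype.val, fun a => a.2.1, fun a => a.2.2.1.separableSpace,
    fun a => hasApproxNthRootsIn_iff.1 a.2.2.2, fun a b => ?_, hcover,
    eq_univ_of_forall fun x => mem_iUnion.2 ?_⟩
  · obtain ⟨ca, hca, hac⟩ := a.2.2.1
    obtain ⟨cb, hcb, hbc⟩ := b.2.2.1
    obtain ⟨c, hc⟩ := hcover (ca ∪ cb) (hca.union hcb)
    exact ⟨c, fun x hx => closure_minimal (subset_union_left.trans hc) c.2.1 (hac hx),
      fun x hx => closure_minimal (subset_union_right.trans hc) c.2.1 (hbc hx)⟩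
  · exact (hcover {x} (countable_singleton x)).imp fun a => singleton_subset_iff.1

/-- a unital C*-algebra with the approximate `n`-th root property is the
union of a directed family of separable closed unital *-subalgebras, each with the
(intrinsic) approximate `n`-th root property, such that every countable subset of `X`
is contained in one of them. -/
theorem exists_directed_family_of_separable_subalgebras
    (n : ℕ) (hn : 2 ≤ n) (X : Type u) [CStarAlgebra X]
    (hX : ApproxNthRootProperty n X) :
    ∃ (A : Type u) (S : A → StarSubalgebra ℂ X),
      (∀ a : A, IsClosed (S a : Set X)) ∧
      (∀ a : A, TopologicalSpace.SeparableSpace (S a)) ∧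
      (∀ (a : A) (x : X), x ∈ S a → ‖x‖ ≤ 1 → ∀ ε : ℝ, 0 < ε →
        ∃ b ∈ S a, ‖b‖ ≤ 1 ∧ ‖x - b ^ n‖ < ε) ∧
      (∀ a b : A, ∃ c : A, S a ≤ S c ∧ S b ≤ S c) ∧
      (∀ C : Set X, C.Countable → ∃ a : A, C ⊆ S a) ∧
      (⋃ a : A, (S a : Set X)) = Set.univ :=
  exists_directed_family_of_separable_subalgebras_general n X hX
end

section
/- Let X be a compact Hausdorff space. Then: (i) S_X is a compact Hausdorff space; (ii) the first-coordinate projection π : S_X → X is a continuous open surjection; (iii) for every x ∈ X the fiber π⁻¹(x) is totally disconnected. -/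
universe u

/-- The Cole construction: `S_X` is the subspace of `X × ℂ^{C(X,ℂ)}` consisting of the
pairs `(x, z)` such that `z f` is a square root of `f x` for every continuous
`f : X → ℂ`. -/
abbrev ColeSpace (X : Type u) [TopologicalSpace X] : Type u :=
  { p : X × (C(X, ℂ) → ℂ) // ∀ f : C(X, ℂ), p.2 f ^ 2 = f p.1 }

/-- Squaring is an open map on `ℂ`. -/
lemma isOpenMap_sq_complex : IsOpenMap fun z : ℂ => z ^ 2 := by
  have hg : AnalyticOnNhd ℂ (fun z : ℂ => z ^ 2) Set.univ := fun z _ => (analyticAt_id).pow 2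
  rcases hg.is_constant_or_isOpen isPreconnected_univ with ⟨w, hw⟩ | h
  · have h0 := hw 0 trivial
    have h1 := hw 1 trivial
    norm_num at h0 h1
    rw [← h0] at h1
    exact absurd h1 one_ne_zero
  · exact fun s hs => h s (Set.subset_univ s) hs

/-- A preconnected subset of a two-point set is a subsingleton. -/
lemma preconnected_pair_subsingleton {P : Set ℂ} {a b : ℂ}
    (hP : IsPreconnected P) (hsub : P ⊆ {a, b}) : P.Subsingleton := by
  rcases eq_or_ne a b with rfl | hab
  · intro u hu v hv
    have h1 := hsub hu; have h2 := hsub hv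
    simp only [Set.mem_insert_iff, Set.mem_singleton_iff, or_self] at h1 h2
    rw [h1, h2]
  · intro u hu v hv
    by_contra huv
    have h1 := hsub hu; have h2 := hsub hv
    simp only [Set.mem_insert_iff, Set.mem_singleton_iff] at h1 h2
    -- WLOG both a and b are in P
    have hab' : a ∈ P ∧ b ∈ P := by
      rcases h1 with rfl | rfl <;> rcases h2 with rfl | rfl <;>
        first | exact absurd rfl huv | exact ⟨hu, hv⟩ | exact ⟨hv, hu⟩
    obtain ⟨haP, hbP⟩ := hab'
    obtain ⟨z, hzP, hza, hzb⟩ :=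
      hP {w : ℂ | w ≠ b} {w : ℂ | w ≠ a} isOpen_ne isOpen_ne
        (fun w hw => by
          rcases hsub hw with rfl | rfl
          · exact Or.inl hab
          · exact Or.inr (Ne.symm hab))
        ⟨a, haP, hab⟩ ⟨b, hbP, Ne.symm hab⟩
    rcases hsub hzP with rfl | rfl
    · exact hzb rfl
    · exact hza rfl

/-- for a compact Hausdorff space `X`, the space `S_X` is compact
Hausdorff, the first-coordinate projection `π : S_X → X` is a continuous open
surjection, and all of its fibers are totally disconnected. -/
theorem coleSpace_properties
    (X : Type u) [TopologicalSpace X] [CompactSpace X] [T2Space X] :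
    CompactSpace (ColeSpace X) ∧ T2Space (ColeSpace X) ∧
    Continuous (fun s : ColeSpace X => s.1.1) ∧
    IsOpenMap (fun s : ColeSpace X => s.1.1) ∧
    Function.Surjective (fun s : ColeSpace X => s.1.1) ∧
    ∀ x : X, IsTotallyDisconnected ((fun s : ColeSpace X => s.1.1) ⁻¹' {x}) := by
  -- The defining set, as a subset of the ambient product space.
  set A : Set (X × (C(X, ℂ) → ℂ)) := {p | ∀ f : C(X, ℂ), p.2 f ^ 2 = f p.1} with hA
  have hAclosed : IsClosed A := by
    have : A = ⋂ f : C(X, ℂ), {p : X × (C(X, ℂ) → ℂ) | p.2 f ^ 2 = f p.1} := by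
      ext p; simp [hA]
    rw [this]
    refine isClosed_iInter fun f => isClosed_eq ?_ ?_
    · exact ((continuous_apply f).comp continuous_snd).pow 2
    · exact (map_continuous f).comp continuous_fst
  -- Compactness
  have hcompact : CompactSpace (ColeSpace X) := by
    suffices h : IsCompact A from isCompact_iff_compactSpace.mp h
    have hK : IsCompact ((Set.univ : Set X) ×ˢ
        Set.pi Set.univ fun f : C(X, ℂ) => Metric.closedBall (0 : ℂ) (Real.sqrt ‖f‖)) :=
      isCompact_univ.prod (isCompact_univ_pi fun f => isCompact_closedBall 0 _)
    refine hK.of_isClosed_subset hAclosed ?_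
    rintro ⟨x, z⟩ hp
    refine ⟨Set.mem_univ _, fun f _ => ?_⟩
    simp only [Metric.mem_closedBall, dist_zero_right]
    rw [Real.le_sqrt (norm_nonneg _) (norm_nonneg f)]
    calc ‖z f‖ ^ 2 = ‖z f ^ 2‖ := by rw [norm_pow]
      _ = ‖f x‖ := by rw [hp f]
      _ ≤ ‖f‖ := f.norm_coe_le_norm x
  refine ⟨hcompact, inferInstance, ?_, ?_, ?_, ?_⟩
  · exact continuous_fst.comp continuous_subtype_val
  · -- openness
    intro U hU
    rw [isOpen_induced_iff] at hU
    obtain ⟨O, hO, rfl⟩ := hU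
    rw [isOpen_iff_mem_nhds]
    rintro x ⟨s, hsO, rfl⟩
    -- Extract a basic open neighborhood of `s.val` inside `O`.
    have hmem : O ∈ nhds s.val := hO.mem_nhds hsO
    rw [← @Prod.mk.eta _ _ s.val, mem_nhds_prod_iff'] at hmem
    obtain ⟨V, v, hVopen, hxV, hvopen, hzv, hVv⟩ := hmem
    obtain ⟨I, W, hIW, hIv⟩ := (isOpen_pi_iff.mp hvopen) _ hzv
    -- The candidate open neighborhood of `x = s.1.1`.
    set G : Set X := V ∩ ⋂ f ∈ I, ⇑f ⁻¹' ((fun w : ℂ => w ^ 2) '' W f) with hG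
    have hGopen : IsOpen G :=
      hVopen.inter (isOpen_biInter_finset fun f hf =>
        (isOpenMap_sq_complex _ (hIW f hf).1).preimage (map_continuous f))
    have hxG : s.1.1 ∈ G := by
      refine ⟨hxV, Set.mem_iInter₂.mpr fun f hf => ?_⟩
      exact ⟨s.1.2 f, (hIW f hf).2, s.2 f⟩
    refine Filter.mem_of_superset (hGopen.mem_nhds hxG) ?_
    rintro y ⟨hyV, hyI⟩
    rw [Set.mem_iInter₂] at hyI
    have hchoice : ∀ f : C(X, ℂ), ∃ u : ℂ, u ^ 2 = f y ∧ (f ∈ I → u ∈ W f) := by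
      intro f
      by_cases hf : f ∈ I
      · obtain ⟨u, huW, hu2⟩ := hyI f hf
        exact ⟨u, hu2, fun _ => huW⟩
      · obtain ⟨u, hu⟩ := IsAlgClosed.exists_pow_nat_eq (f y) zero_lt_two
        exact ⟨u, hu, fun h => absurd h hf⟩
    choose w hw1 hw2 using hchoice
    refine ⟨⟨(y, w), fun f => hw1 f⟩, ?_, rfl⟩
    exact hVv ⟨hyV, hIv fun f hf => hw2 f hf⟩
  · -- surjectivity
    intro x
    have hchoice : ∀ f : C(X, ℂ), ∃ u : ℂ, u ^ 2 = f x := fun f =>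
      IsAlgClosed.exists_pow_nat_eq (f x) zero_lt_two
    choose w hw using hchoice
    exact ⟨⟨(x, w), hw⟩, rfl⟩
  · -- totally disconnected fibers
    intro x T hTsub hT s hs t ht
    have hsx : s.1.1 = x := hTsub hs
    have htx : t.1.1 = x := hTsub ht
    refine Subtype.ext (Prod.ext (hsx.trans htx.symm) (funext fun f => ?_))
    -- image of T under evaluation at f
    have hcont : Continuous fun u : ColeSpace X => u.1.2 f :=
      (continuous_apply f).comp (continuous_snd.comp continuous_subtype_val)
    have himg : IsPreconnected ((fun u : ColeSpace X => u.1.2 f) '' T) :=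
      hT.image _ hcont.continuousOn
    set a : ℂ := s.1.2 f with ha
    have hsubpair : ((fun u : ColeSpace X => u.1.2 f) '' T) ⊆ {a, -a} := by
      rintro _ ⟨u, huT, rfl⟩
      have hux : u.1.1 = x := hTsub huT
      have h1 : (u.1.2 f) ^ 2 = a ^ 2 := by
        rw [u.2 f, ha, s.2 f, hux, hsx]
      have := (Commute.all (u.1.2 f) a).sq_eq_sq_iff_eq_or_eq_neg.mp h1
      simpa [Set.mem_insert_iff, Set.mem_singleton_iff] using this
    have hsing := preconnected_pair_subsingleton himg hsubpair
    exact hsing ⟨s, hs, rfl⟩ ⟨t, ht, rfl⟩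
end

section
/- Let X be a compact Hausdorff space, Y ⊆ X a closed subspace, i : Y → X the inclusion map, and r : X → Y a continuous retraction (r ∘ i = id_Y). Then there exist continuous maps ī : S_Y → S_X and r̄ : S_X → S_Y such that π_X ∘ ī = i ∘ π_Y, π_Y ∘ r̄ = r ∘ π_X, and r̄ ∘ ī = id_{S_Y}; in particular ī is a topological embedding of S_Y into S_X and r̄ restricts to a retraction onto its image. -/
universe u

/-- if `Y` is a closed subspace of a compact Hausdorff space `X` which is
a retract of `X` via a retraction `r`, then there are retractions s and maps
`ī : S_Y → S_X` and `r̄ : S_X → S_Y` with `π_X ∘ ī = i ∘ π_Y`, `π_Y ∘ r̄ = r ∘ π_X` and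
`r̄ ∘ ī = id`; in particular `ī` is a topological embedding. -/
theorem coleSpace_retract
    (X : Type u) [TopologicalSpace X] [CompactSpace X] [T2Space X]
    (Y : Set X) (hY : IsClosed Y) (r : C(X, Y)) (hr : ∀ y : Y, r (y : X) = y) :
    ∃ (ibar : C(ColeSpace (↥Y), ColeSpace X)) (rbar : C(ColeSpace X, ColeSpace (↥Y))),
      (∀ s : ColeSpace (↥Y), (ibar s).1.1 = ((s.1.1 : Y) : X)) ∧
      (∀ s : ColeSpace X, (rbar s).1.1 = r s.1.1) ∧
      (∀ s : ColeSpace (↥Y), rbar (ibar s) = s) ∧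
      Topology.IsEmbedding ibar := by
  let incl : C(↥Y, X) := ⟨Subtype.val, continuous_subtype_val⟩
  let ibar : C(ColeSpace (↥Y), ColeSpace X) :=
    ⟨fun s => ⟨((s.1.1 : X), fun f => s.1.2 (f.comp incl)),
      fun f => by exact s.2 (f.comp incl)⟩, by
      apply Continuous.subtype_mk
      exact (continuous_subtype_val.comp
          ((continuous_fst.comp continuous_subtype_val))).prodMk
        (continuous_pi fun f =>
          (continuous_apply (f.comp incl)).comp (continuous_snd.comp continuous_subtype_val))⟩
  let rbar : C(ColeSpace X, ColeSpace (↥Y)) :=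
    ⟨fun s => ⟨(r s.1.1, fun g => s.1.2 (g.comp r)),
      fun g => by simpa using s.2 (g.comp r)⟩, by
      apply Continuous.subtype_mk
      exact (r.continuous.comp
          ((continuous_fst.comp continuous_subtype_val))).prodMk
        (continuous_pi fun g =>
          (continuous_apply (g.comp r)).comp (continuous_snd.comp continuous_subtype_val))⟩
  have hri : ∀ s : ColeSpace (↥Y), rbar (ibar s) = s := by
    intro s
    apply Subtype.ext
    apply Prod.ext
    · exact hr s.1.1
    · funext g
      show s.1.2 (((g.comp r)).comp incl) = s.1.2 g
      have : (g.comp r).comp incl = g := by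
        ext y
        simp [incl, hr y]
      rw [this]
  refine ⟨ibar, rbar, fun s => rfl, fun s => rfl, hri, ?_⟩
  exact Function.LeftInverse.isEmbedding hri rbar.continuous ibar.continuous
end

section
/- Let X be a compact Hausdorff space and f : X → ℂ a continuous function. Define p_f : S_X → S_f by p_f(x, z) = (x, z(f)). Then p_f is a continuous surjection of S_X onto S_f, and p_f is an open map (with respect to the subspace topology on S_f). -/
universe u

/-- For a continuous `f : X → ℂ`, `S_f` is the subspace of `X × ℂ` of pairs `(x, w)`
with `w² = f x`. -/
abbrev SqrtSurface {X : Type u} [TopologicalSpace X] (f : C(X, ℂ)) : Type u :=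
  { q : X × ℂ // q.2 ^ 2 = f q.1 }

/-- A choice of complex square root. -/
noncomputable def myRt (c : ℂ) : ℂ := Classical.choose (IsAlgClosed.exists_pow_nat_eq c two_pos)

lemma myRt_sq (c : ℂ) : myRt c ^ 2 = c :=
  Classical.choose_spec (IsAlgClosed.exists_pow_nat_eq c two_pos)

/-- If `r²` is close enough to `z₀²`, then one of `±r` is within `ε` of `z₀`. -/
lemma adjust_lt {ε : ℝ} (hε : 0 < ε) (z₀ r : ℂ)
    (h : ‖r ^ 2 - z₀ ^ 2‖ < if z₀ = 0 then ε ^ 2 else ε * ‖z₀‖) :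
    ‖(if ‖r - z₀‖ < ε then r else -r) - z₀‖ < ε := by
  by_cases h0 : z₀ = 0
  · subst h0
    rw [if_pos rfl] at h
    simp only [ne_eq, OfNat.ofNat_ne_zero, not_false_eq_true, zero_pow, sub_zero] at h ⊢
    have hr : ‖r‖ < ε := by
      nlinarith [norm_nonneg r, norm_pow r 2]
    rw [if_pos hr]; exact hr
  · rw [if_neg h0] at h
    have hAB : ‖r - z₀‖ * ‖r + z₀‖ < ε * ‖z₀‖ := by
      rw [← norm_mul]
      calc ‖(r - z₀) * (r + z₀)‖ = ‖r ^ 2 - z₀ ^ 2‖ := by ring_nf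
        _ < _ := h
    have hsum : 2 * ‖z₀‖ ≤ ‖r - z₀‖ + ‖r + z₀‖ := by
      have h1 := norm_add_le (r + z₀) (z₀ - r)
      have h2 : (r + z₀) + (z₀ - r) = 2 * z₀ := by ring
      rw [h2, norm_mul, Complex.norm_two] at h1
      rw [norm_sub_rev z₀ r] at h1
      linarith
    have hc : 0 < ‖z₀‖ := norm_pos_iff.mpr h0
    split_ifs with hif
    · exact hif
    · push_neg at hif
      have heq : ‖-r - z₀‖ = ‖r + z₀‖ := by
        rw [show -r - z₀ = -(r + z₀) by ring, norm_neg]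
      rw [heq]
      set A := ‖r - z₀‖
      set B := ‖r + z₀‖
      have hB0 : 0 ≤ B := norm_nonneg _
      have hBc : B < ‖z₀‖ := by nlinarith
      have hAc : ‖z₀‖ < A := by linarith
      nlinarith

open scoped Classical in
/-- for a compact Hausdorff space `X` and a continuous `f : X → ℂ`, the
natural map `p_f : S_X → S_f`, `(x, z) ↦ (x, z f)`, is a continuous open surjection. -/
theorem coleSpace_proj_to_sqrtSurface
    (X : Type u) [TopologicalSpace X] [CompactSpace X] [T2Space X] (f : C(X, ℂ)) :
    Continuous (fun s : ColeSpace X => (⟨(s.1.1, s.1.2 f), s.2 f⟩ : SqrtSurface f)) ∧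
    Function.Surjective
      (fun s : ColeSpace X => (⟨(s.1.1, s.1.2 f), s.2 f⟩ : SqrtSurface f)) ∧
    IsOpenMap (fun s : ColeSpace X => (⟨(s.1.1, s.1.2 f), s.2 f⟩ : SqrtSurface f)) := by
  refine ⟨?_, ?_, ?_⟩
  · -- Continuity
    apply Continuous.subtype_mk
    exact (continuous_fst.comp continuous_subtype_val).prodMk
      ((continuous_apply f).comp (continuous_snd.comp continuous_subtype_val))
  · -- Surjectivity
    rintro ⟨⟨x, w⟩, hw⟩
    refine ⟨⟨(x, fun g => if g = f then w else myRt (g x)), ?_⟩, ?_⟩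
    · intro g
      by_cases hg : g = f
      · subst hg; simpa using hw
      · simp [hg, myRt_sq]
    · exact Subtype.ext (by simp)
  · -- Openness
    set p := fun s : ColeSpace X => (⟨(s.1.1, s.1.2 f), s.2 f⟩ : SqrtSurface f) with hp
    intro U hU
    rw [isOpen_iff_mem_nhds]
    rintro q ⟨s₀, hs₀U, rfl⟩
    set x₀ := s₀.1.1 with hx₀
    set z₀ := s₀.1.2 with hz₀
    -- U is the preimage of an open V
    obtain ⟨V, hVopen, hVU⟩ := isOpen_induced_iff.mp hU
    have hs₀V : s₀.val ∈ V := by rw [← hVU] at hs₀U; exact hs₀U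
    -- V contains a product A ×ˢ B around (x₀, z₀)
    have hVnhds : V ∈ nhds s₀.val := hVopen.mem_nhds hs₀V
    rw [show s₀.val = (x₀, z₀) from rfl, mem_nhds_prod_iff] at hVnhds
    obtain ⟨A, hA, B, hB, hABV⟩ := hVnhds
    obtain ⟨A', hA'A, hA'open, hxA'⟩ := mem_nhds_iff.mp hA
    -- B contains a finite-support pi set
    rw [nhds_pi] at hB
    obtain ⟨I, hIfin, t, ht, hItB⟩ := Filter.mem_pi.mp hB
    -- choose balls inside each t g
    have hball : ∀ g : C(X, ℂ), ∃ e > 0, Metric.ball (z₀ g) e ⊆ t g := fun g =>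
      Metric.mem_nhds_iff.mp (ht g)
    choose ε hεpos hεball using hball
    -- the tolerance on X for each coordinate g
    set δ : C(X, ℂ) → ℝ := fun g => if z₀ g = 0 then ε g ^ 2 else ε g * ‖z₀ g‖
      with hδ
    have hδpos : ∀ g, 0 < δ g := by
      intro g
      rw [hδ]
      dsimp only
      split_ifs with h
      · exact pow_pos (hεpos g) 2
      · exact mul_pos (hεpos g) (norm_pos_iff.mpr h)
    -- the open neighborhood in X
    set W : Set X := A' ∩ ⋂ g ∈ I, {x | ‖g x - g x₀‖ < δ g} with hW
    have hWopen : IsOpen W := by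
      apply hA'open.inter
      apply hIfin.isOpen_biInter
      intro g _
      exact isOpen_lt (continuous_norm.comp (g.continuous.sub continuous_const))
        continuous_const
    have hx₀W : x₀ ∈ W := by
      refine ⟨hxA', ?_⟩
      simp only [Set.mem_iInter, Set.mem_setOf_eq]
      intro g _
      simpa using hδpos g
    -- the candidate neighborhood in S_f
    have hN : (Subtype.val ⁻¹' (W ×ˢ Metric.ball (z₀ f) (ε f)) : Set (SqrtSurface f))
        ∈ nhds (p s₀) := by
      apply IsOpen.mem_nhds
      · exact (hWopen.prod Metric.isOpen_ball).preimage continuous_subtype_val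
      · refine Set.mem_preimage.mpr ⟨hx₀W, ?_⟩
        simpa [hp, hz₀] using hεpos f
    refine Filter.mem_of_superset hN ?_
    -- every point of N is in the image
    rintro ⟨⟨x, w⟩, hxw⟩ ⟨hxWmem, hwball⟩
    simp only [Metric.mem_ball, Complex.dist_eq] at hwball
    set z : C(X, ℂ) → ℂ := fun g =>
      if g = f then w
      else if ‖myRt (g x) - z₀ g‖ < ε g then myRt (g x) else -myRt (g x) with hzdef
    have hz : ∀ g : C(X, ℂ), z g ^ 2 = g x := by
      intro g
      rw [hzdef]
      dsimp only
      split_ifs with h1 h2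
      · subst h1; exact hxw
      · exact myRt_sq (g x)
      · rw [neg_pow, myRt_sq]; ring
    refine ⟨⟨(x, z), hz⟩, ?_, ?_⟩
    · -- membership in U
      rw [← hVU]
      apply hABV
      refine ⟨hA'A hxWmem.1, ?_⟩
      apply hItB
      intro g hgI
      apply hεball g
      rw [Metric.mem_ball, Complex.dist_eq]
      show ‖z g - z₀ g‖ < ε g
      rw [hzdef]
      dsimp only
      by_cases h1 : g = f
      · rw [if_pos h1]; subst h1; exact hwball
      · rw [if_neg h1]
        apply adjust_lt (hεpos g)
        rw [myRt_sq, show (z₀ g) ^ 2 = g x₀ from s₀.2 g]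
        have := hxWmem.2
        simp only [Set.mem_iInter, Set.mem_setOf_eq] at this
        exact this g hgI
    · -- maps to the right point
      apply Subtype.ext
      show (x, z f) = (x, w)
      rw [hzdef]
      simp
end
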